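/- arXiv:1211.0642 — 4 statements merged into one kernel-verified Lean document; each statement's English description precedes it below -/
import Mathlib

section
/- Let d = 2. Define ψ̂^{(1)}(ξ₁,ξ₂) = ψ̂₁(ξ₁) ψ̂₂(ξ₂/ξ₁), where ψ̂₁, ψ̂₂ satisfy the shearlet conditions: ∑_{j≥0}|ψ̂₁(2^{-2j}ω)|² = 1 for |ω| ≥ 1/8, and ∑_{ℓ=-2^j}^{2^j}|ψ̂₂(2^jω-ℓ)|² = 1 for |ω| ≤ 1. Then for every ξ = (ξ₁,ξ₂) in the cone D^{(1)} = {ξ : |ξ₁| ≥ 1/8, |ξ₂/ξ₁| ≤ 1}, one has ∑_{j≥0} ∑_{ℓ=-2^j}^{2^j} |ψ̂^{(1)}(ξ A^{-j} B^{[-ℓ]})|² = 1, where ξ A^{-j} B^{[-ℓ]} = (4^{-j}ξ₁, -4^{-j}ξ₁ℓ + 2^{-j}ξ₂). -/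
noncomputable section

/-- The Parseval frame condition on the cone `D^(1)` in dimension `d = 2`:
for `ξ = (ξ₁, ξ₂)` with `|ξ₁| ≥ 1/8` and `|ξ₂/ξ₁| ≤ 1`,
`∑_{j≥0} ∑_{ℓ=-2^j}^{2^j} |ψ̂^{(1)}(ξ A^{-j} B^{[-ℓ]})|² = 1`, where
`ψ̂^{(1)}(η₁, η₂) = ψ̂₁(η₁) ψ̂₂(η₂/η₁)` and
`ξ A^{-j} B^{[-ℓ]} = (4^{-j} ξ₁, -4^{-j} ξ₁ ℓ + 2^{-j} ξ₂)`. -/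
theorem shearlet_cone_parseval (ψ₁ ψ₂ : ℝ → ℂ)
    (hψ₁smooth : ContDiff ℝ (⊤ : ℕ∞) ψ₁) (hψ₂smooth : ContDiff ℝ (⊤ : ℕ∞) ψ₂)
    (hψ₁supp : Function.support ψ₁ ⊆
      Set.Icc (-(1/2) : ℝ) (-(1/16)) ∪ Set.Icc (1/16 : ℝ) (1/2))
    (hψ₂supp : Function.support ψ₂ ⊆ Set.Icc (-1 : ℝ) 1)
    (hψ₁sum : ∀ ω : ℝ, 1/8 ≤ |ω| →
      ∑' j : ℕ, ‖ψ₁ ((2 : ℝ) ^ (-(2 * (j : ℤ))) * ω)‖ ^ 2 = 1)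
    (hψ₂sum : ∀ (j : ℕ) (ω : ℝ), |ω| ≤ 1 →
      ∑ ℓ ∈ Finset.Icc (-(2 ^ j : ℤ)) (2 ^ j), ‖ψ₂ ((2 : ℝ) ^ j * ω - (ℓ : ℝ))‖ ^ 2 = 1) :
    ∀ ξ₁ ξ₂ : ℝ, 1/8 ≤ |ξ₁| → |ξ₂ / ξ₁| ≤ 1 →
      ∑' j : ℕ, ∑ ℓ ∈ Finset.Icc (-(2 ^ j : ℤ)) (2 ^ j),
        ‖ψ₁ ((4 : ℝ) ^ (-(j : ℤ)) * ξ₁) *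
          ψ₂ ((-(4 : ℝ) ^ (-(j : ℤ)) * ξ₁ * (ℓ : ℝ) + (2 : ℝ) ^ (-(j : ℤ)) * ξ₂) /
            ((4 : ℝ) ^ (-(j : ℤ)) * ξ₁))‖ ^ 2 = 1 := by
  intro ξ₁ ξ₂ h1 h2
  have hξ₁ : ξ₁ ≠ 0 := by
    intro h; rw [h, abs_zero] at h1; linarith
  have key : ∀ j : ℕ, ∑ ℓ ∈ Finset.Icc (-(2 ^ j : ℤ)) (2 ^ j),
      ‖ψ₁ ((4 : ℝ) ^ (-(j : ℤ)) * ξ₁) *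
        ψ₂ ((-(4 : ℝ) ^ (-(j : ℤ)) * ξ₁ * (ℓ : ℝ) + (2 : ℝ) ^ (-(j : ℤ)) * ξ₂) /
          ((4 : ℝ) ^ (-(j : ℤ)) * ξ₁))‖ ^ 2
      = ‖ψ₁ ((4 : ℝ) ^ (-(j : ℤ)) * ξ₁)‖ ^ 2 := by
    intro j
    have h4 : ((4 : ℝ) ^ (-(j : ℤ))) ≠ 0 := by positivity
    have harg : ∀ ℓ : ℤ,
        (-(4 : ℝ) ^ (-(j : ℤ)) * ξ₁ * (ℓ : ℝ) + (2 : ℝ) ^ (-(j : ℤ)) * ξ₂) /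
          ((4 : ℝ) ^ (-(j : ℤ)) * ξ₁) = (2 : ℝ) ^ j * (ξ₂ / ξ₁) - (ℓ : ℝ) := by
      intro ℓ
      have h24 : (2 : ℝ) ^ (-(j : ℤ)) = (4 : ℝ) ^ (-(j : ℤ)) * (2 : ℝ) ^ j := by
        have e : ((2:ℝ)^(2:ℕ))^(-(j:ℤ)) = (2:ℝ)^((2:ℤ)*(-(j:ℤ))) := by
          rw [← zpow_natCast (2:ℝ) 2, ← zpow_mul]; norm_num
        rw [show (4:ℝ) = 2^(2:ℕ) by norm_num, e, ← zpow_natCast (2:ℝ) j,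
          ← zpow_add₀ (by norm_num : (2:ℝ) ≠ 0)]
        congr 1; push_cast; ring
      rw [h24]
      field_simp
      ring
    simp only [harg]
    calc ∑ ℓ ∈ Finset.Icc (-(2 ^ j : ℤ)) (2 ^ j),
          ‖ψ₁ ((4 : ℝ) ^ (-(j : ℤ)) * ξ₁) * ψ₂ ((2 : ℝ) ^ j * (ξ₂ / ξ₁) - (ℓ : ℝ))‖ ^ 2
        = ∑ ℓ ∈ Finset.Icc (-(2 ^ j : ℤ)) (2 ^ j),
          ‖ψ₁ ((4 : ℝ) ^ (-(j : ℤ)) * ξ₁)‖ ^ 2 * ‖ψ₂ ((2 : ℝ) ^ j * (ξ₂ / ξ₁) - (ℓ : ℝ))‖ ^ 2 := by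
          refine Finset.sum_congr rfl fun ℓ _ => ?_
          rw [norm_mul, mul_pow]
      _ = ‖ψ₁ ((4 : ℝ) ^ (-(j : ℤ)) * ξ₁)‖ ^ 2 *
          ∑ ℓ ∈ Finset.Icc (-(2 ^ j : ℤ)) (2 ^ j),
            ‖ψ₂ ((2 : ℝ) ^ j * (ξ₂ / ξ₁) - (ℓ : ℝ))‖ ^ 2 := by
          rw [Finset.mul_sum]
      _ = ‖ψ₁ ((4 : ℝ) ^ (-(j : ℤ)) * ξ₁)‖ ^ 2 := by
          rw [hψ₂sum j (ξ₂ / ξ₁) h2, mul_one]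
  simp only [key]
  have h44 : ∀ j : ℕ, (4 : ℝ) ^ (-(j : ℤ)) = (2 : ℝ) ^ (-(2 * (j : ℤ))) := by
    intro j
    have e : ((2:ℝ)^(2:ℕ))^(-(j:ℤ)) = (2:ℝ)^((2:ℤ)*(-(j:ℤ))) := by
      rw [← zpow_natCast (2:ℝ) 2, ← zpow_mul]; norm_num
    rw [show (4:ℝ) = 2^(2:ℕ) by norm_num, e]
    congr 1; push_cast; ring
  simp only [h44]
  exact hψ₁sum ξ₁ h1
end
end

section
/- Let g, h ∈ S(ℝ^d) (Schwartz functions), d ≥ 2, and fix integers j ≥ 0 and i ∈ {j-1, j, j+1} with i ≥ 0, shear parameters ℓ, m ∈ ℤ^{d-1} with |ℓ_i'| ≤ 2^j, |m_i'| ≤ 2^i componentwise, and translation parameters k, n ∈ ℤ^d. Define g_{j,ℓ,k}(x) = |det A|^{j/2} g(B^{[ℓ]} A^j x - k) and h_{i,m,n}(x) = |det A|^{i/2} h(B^{[m]} A^i x - n), where det A = 2^{d+1}. Then for every N > d there is a constant C_N (independent of j, i, ℓ, m, k, n) such that for all x ∈ ℝ^d, |(g_{j,ℓ,k} ∗ h_{i,m,n})(x)|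 ≤ C_N (1 + 2^i |x - A^{-i}B^{-[m]} n - A^{-j}B^{-[ℓ]} k|)^{-N}. -/
open MeasureTheory

noncomputable section

def shearletA (d j : ℕ) [NeZero d] : Matrix (Fin d) (Fin d) ℝ :=
  Matrix.diagonal (fun i => if i = 0 then (4 : ℝ) ^ j else (2 : ℝ) ^ j)

def shearletB (d : ℕ) [NeZero d] (ℓ : Fin d → ℤ) : Matrix (Fin d) (Fin d) ℝ :=
  Matrix.of fun i k => if i = k then 1 else if i = 0 then (ℓ k : ℝ) else 0

def matVec {d : ℕ} (M : Matrix (Fin d) (Fin d) ℝ) (x : EuclideanSpace ℝ (Fin d)) :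
    EuclideanSpace ℝ (Fin d) :=
  (WithLp.equiv 2 (Fin d → ℝ)).symm (M.mulVec (WithLp.equiv 2 (Fin d → ℝ) x))

def intVec (d : ℕ) (k : Fin d → ℤ) : EuclideanSpace ℝ (Fin d) :=
  (WithLp.equiv 2 (Fin d → ℝ)).symm (fun t => (k t : ℝ))

/-- The anisotropically dilated, sheared and translated copy
`g_{j,ℓ,k}(x) = |det A|^{j/2} g(B^[ℓ] A^j x - k)` of `g`, with `det A = 2^{d+1}`. -/
def shearDilate {d : ℕ} [NeZero d] (g : SchwartzMap (EuclideanSpace ℝ (Fin d)) ℂ)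
    (j : ℕ) (ℓ k : Fin d → ℤ) (x : EuclideanSpace ℝ (Fin d)) : ℂ :=
  (Real.sqrt ((2 : ℝ) ^ ((d + 1) * j)) : ℝ) *
    g (matVec (shearletB d ℓ * shearletA d j) x - intVec d k)

/-!
Write `T = B^[ℓ]A^j`, `T' = B^[m]A^i`, `a = T⁻¹k`, `b = T'⁻¹n`, so that the integrand is
`|det T|^{1/2} |det T'|^{1/2} g(T(y - a)) h(T'(x - y - b))`. Because the shear entries are bounded
by the scale, `T` and `T'` expand every vector by at least `2^i`, up to a factor depending only on
`d` (for `T` this uses `i ≤ j + 1`). The triangle inequality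
`‖x - b - a‖ ≤ ‖y - a‖ + ‖x - y - b‖` then turns the product of the Schwartz decays of the two
factors into `(1 + 2^i ‖x - b - a‖)^(-N)` times a spare `(1 + ‖T(y - a)‖)^(-(d+1))`, whose
integral is `|det T|⁻¹` times a constant. The normalisations leave `(det T' / det T)^{1/2}`, which
is bounded because `i ≤ j + 1`.
-/

section Haar

variable {E F : Type*} [NormedAddCommGroup E] [NormedSpace ℝ E] [MeasurableSpace E]
  [BorelSpace E] [FiniteDimensional ℝ E] [NormedAddCommGroup F]
  (μ : Measure E) [μ.IsAddHaarMeasure]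

theorem measurableEmbedding_linearMap {L : E →ₗ[ℝ] E} (hL : LinearMap.det L ≠ 0) :
    MeasurableEmbedding L :=
  (L.equivOfDetNeZero hL).toContinuousLinearEquiv.toHomeomorph.measurableEmbedding

theorem integrable_comp_linearMap_iff {f : E → F} {L : E →ₗ[ℝ] E} (hL : LinearMap.det L ≠ 0) :
    Integrable (fun x ↦ f (L x)) μ ↔ Integrable f μ := by
  rw [← Function.comp_def, ← (measurableEmbedding_linearMap hL).integrable_map_iff,
    Measure.map_linearMap_addHaar_eq_smul_addHaar μ hL,
    integrable_smul_measure (by simpa using hL) ENNReal.ofReal_ne_top]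

theorem integral_comp_linearMap [NormedSpace ℝ F] (f : E → F) {L : E →ₗ[ℝ] E}
    (hL : LinearMap.det L ≠ 0) :
    ∫ x, f (L x) ∂μ = |LinearMap.det L|⁻¹ • ∫ x, f x ∂μ := by
  rw [← (measurableEmbedding_linearMap hL).integral_map,
    Measure.map_linearMap_addHaar_eq_smul_addHaar μ hL, integral_smul_measure,
    ENNReal.toReal_ofReal (by positivity), abs_inv]

end Haar

theorem EuclideanSpace.norm_le_sqrt_card_mul {ι : Type*} [Fintype ι] {v : EuclideanSpace ℝ ι}
    {c : ℝ} (hc : 0 ≤ c) (hv : ∀ t, |v t| ≤ c) : ‖v‖ ≤ √(Fintype.card ι) * c := by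
  rw [EuclideanSpace.norm_eq, ← Real.sqrt_sq hc, ← Real.sqrt_mul (Nat.cast_nonneg _)]
  gcongr
  calc ∑ t, ‖v t‖ ^ 2 ≤ ∑ _t : ι, c ^ 2 := by
        gcongr with t; rw [Real.norm_eq_abs]; exact hv t
    _ = _ := by simp

section Shearlet

open Matrix

variable {d : ℕ}

theorem matVec_eq_toLpLin (M : Matrix (Fin d) (Fin d) ℝ) : matVec M = toLpLin 2 2 M := rfl

theorem matVec_sub (M : Matrix (Fin d) (Fin d) ℝ) (x y : EuclideanSpace ℝ (Fin d)) :
    matVec M (x - y) = matVec M x - matVec M y := by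
  simp [matVec_eq_toLpLin]

theorem matVec_mul_inv_cancel {M : Matrix (Fin d) (Fin d) ℝ} (hM : IsUnit M.det)
    (x : EuclideanSpace ℝ (Fin d)) : matVec M (matVec M⁻¹ x) = x := by
  simp [matVec, Matrix.mulVec_mulVec, Matrix.mul_nonsing_inv M hM]

theorem matVec_sub_eq {M : Matrix (Fin d) (Fin d) ℝ} (hM : IsUnit M.det)
    (x y : EuclideanSpace ℝ (Fin d)) : matVec M x - y = matVec M (x - matVec M⁻¹ y) := by
  rw [matVec_sub, matVec_mul_inv_cancel hM]

variable [NeZero d]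

theorem det_shearletA (j : ℕ) : (shearletA d j).det = 2 ^ ((d + 1) * j) := by
  obtain ⟨d, rfl⟩ := Nat.exists_eq_succ_of_ne_zero (NeZero.ne d)
  simp only [shearletA, det_diagonal, Fin.prod_univ_succ, if_pos, Fin.succ_ne_zero,
    if_false, Finset.prod_const, Finset.card_univ, Fintype.card_fin]
  rw [show (4 : ℝ) = 2 ^ 2 by norm_num, ← pow_mul, ← pow_mul, ← pow_add]
  congr 1
  rw [Nat.succ_eq_add_one]
  ring

theorem det_shearletB (ℓ : Fin d → ℤ) : (shearletB d ℓ).det = 1 := by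
  refine (det_of_isUpperTriangular fun s t hts ↦ ?_).trans ?_
  · have hs : s ≠ 0 := fun hs ↦ by simp [hs] at hts
    simp [shearletB, (show t < s from hts).ne', hs]
  · simp [shearletB]

theorem det_shearlet (j : ℕ) (ℓ : Fin d → ℤ) :
    (shearletB d ℓ * shearletA d j).det = 2 ^ ((d + 1) * j) := by
  rw [Matrix.det_mul, det_shearletB, det_shearletA, one_mul]

theorem shearletA_mulVec_apply (j : ℕ) (v : Fin d → ℝ) (t : Fin d) :
    (shearletA d j *ᵥ v) t = (if t = 0 then 4 ^ j else 2 ^ j) * v t := by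
  simp [shearletA, Matrix.mulVec_diagonal]

theorem shearletB_mulVec_apply_of_ne_zero (ℓ : Fin d → ℤ) (u : Fin d → ℝ) {t : Fin d}
    (ht : t ≠ 0) : (shearletB d ℓ *ᵥ u) t = u t := by
  simp [shearletB, Matrix.mulVec, dotProduct, ht]

theorem shearletB_mulVec_apply_zero (ℓ : Fin d → ℤ) (u : Fin d → ℝ) :
    (shearletB d ℓ *ᵥ u) 0 = u 0 + ∑ t ∈ Finset.univ.erase 0, ℓ t * u t := by
  simp only [shearletB, Matrix.mulVec, dotProduct, Matrix.of_apply]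
  rw [← Finset.add_sum_erase _ _ (Finset.mem_univ 0)]
  refine congrArg₂ _ (by simp) (Finset.sum_congr rfl fun t ht ↦ ?_)
  simp [Ne.symm (Finset.ne_of_mem_erase ht)]

theorem abs_apply_zero_le_norm_shearletB_mulVec {ℓ : Fin d → ℤ} {c : ℝ} (hc : 1 ≤ c)
    (hℓ : ∀ t : Fin d, t ≠ 0 → |(ℓ t : ℝ)| ≤ c) (u : Fin d → ℝ) :
    |u 0| ≤ c * d * ‖(WithLp.toLp 2 (shearletB d ℓ *ᵥ u) : EuclideanSpace ℝ (Fin d))‖ := by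
  set w : EuclideanSpace ℝ (Fin d) := WithLp.toLp 2 (shearletB d ℓ *ᵥ u)
  have hw : ∀ s, |w s| ≤ ‖w‖ := fun s ↦ by simpa using PiLp.norm_apply_le w s
  have hu : ∀ s, s ≠ 0 → u s = w s := fun s hs ↦
    (shearletB_mulVec_apply_of_ne_zero ℓ u hs).symm
  have hu0 : u 0 = w 0 - ∑ s ∈ Finset.univ.erase 0, ℓ s * u s := by
    simp only [w, shearletB_mulVec_apply_zero]; ring
  calc |u 0| ≤ |w 0| + ∑ s ∈ Finset.univ.erase (0 : Fin d), |(ℓ s : ℝ)| * |u s| := by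
        rw [hu0]
        refine (abs_sub _ _).trans ?_
        gcongr
        simpa only [abs_mul] using
          Finset.abs_sum_le_sum_abs (fun s ↦ (ℓ s : ℝ) * u s) (Finset.univ.erase 0)
    _ ≤ c * ‖w‖ + ∑ s ∈ Finset.univ.erase (0 : Fin d), c * ‖w‖ := by
        gcongr with s hs
        · nlinarith [hw 0, norm_nonneg w]
        · exact hℓ s (Finset.ne_of_mem_erase hs)
        · rw [hu s (Finset.ne_of_mem_erase hs)]; exact hw s
    _ = c * d * ‖w‖ := by
        rw [Finset.add_sum_erase _ (fun _ ↦ c * ‖w‖) (Finset.mem_univ 0)]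
        simp only [Finset.sum_const, Finset.card_univ, Fintype.card_fin, nsmul_eq_mul]
        ring

theorem two_pow_mul_abs_le_norm_matVec_shearlet {j : ℕ} {ℓ : Fin d → ℤ}
    (hℓ : ∀ t : Fin d, t ≠ 0 → |ℓ t| ≤ 2 ^ j) (v : EuclideanSpace ℝ (Fin d)) (t : Fin d) :
    2 ^ j * |v t| ≤ d * ‖matVec (shearletB d ℓ * shearletA d j) v‖ := by
  set w := matVec (shearletB d ℓ * shearletA d j) v
  have hw : w = WithLp.toLp 2 (shearletB d ℓ *ᵥ (shearletA d j *ᵥ v.ofLp)) := by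
    simp [w, matVec, mulVec_mulVec]
  by_cases ht : t = 0
  · subst ht
    have hℓ' (s : Fin d) (hs : s ≠ 0) : |(ℓ s : ℝ)| ≤ 2 ^ j := by exact_mod_cast hℓ s hs
    have h := abs_apply_zero_le_norm_shearletB_mulVec (one_le_pow₀ one_le_two) hℓ'
      (shearletA d j *ᵥ v.ofLp)
    rw [← hw, shearletA_mulVec_apply, if_pos rfl, abs_mul, abs_of_pos (by positivity),
      show (4 : ℝ) ^ j = 2 ^ j * 2 ^ j by rw [← mul_pow]; norm_num, mul_assoc, mul_assoc] at h
    exact le_of_mul_le_mul_left h (by positivity)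
  · calc 2 ^ j * |v t| = |w t| := by
          simp only [hw, WithLp.ofLp_toLp, shearletB_mulVec_apply_of_ne_zero ℓ _ ht,
            shearletA_mulVec_apply, if_neg ht, abs_mul, abs_pow, abs_two]
      _ ≤ 1 * ‖w‖ := by simpa using PiLp.norm_apply_le w t
      _ ≤ d * ‖w‖ := by gcongr; exact Nat.one_le_cast.2 NeZero.one_le

theorem two_pow_mul_norm_le_norm_matVec_shearlet {j : ℕ} {ℓ : Fin d → ℤ}
    (hℓ : ∀ t : Fin d, t ≠ 0 → |ℓ t| ≤ 2 ^ j) (v : EuclideanSpace ℝ (Fin d)) :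
    2 ^ j * ‖v‖ ≤ √d * d * ‖matVec (shearletB d ℓ * shearletA d j) v‖ := by
  calc 2 ^ j * ‖v‖ = ‖(2 ^ j : ℝ) • v‖ := by rw [norm_smul, Real.norm_of_nonneg (by positivity)]
    _ ≤ √(Fintype.card (Fin d)) * (d * ‖matVec (shearletB d ℓ * shearletA d j) v‖) :=
        EuclideanSpace.norm_le_sqrt_card_mul (by positivity) fun t ↦ by
          simpa [abs_mul] using two_pow_mul_abs_le_norm_matVec_shearlet hℓ v t
    _ = _ := by rw [Fintype.card_fin, mul_assoc]

end Shearlet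

theorem one_add_rpow_neg_mul_le {p q σ κ N : ℝ} (hp : 0 ≤ p) (hq : 0 ≤ q) (hσ : 0 ≤ σ)
    (hκ : 1 ≤ κ) (hN : 0 ≤ N) (h : σ ≤ κ * p + κ * q) :
    (1 + p) ^ (-N) * (1 + q) ^ (-N) ≤ κ ^ N * (1 + σ) ^ (-N) := by
  have hpq : 1 + σ ≤ κ * ((1 + p) * (1 + q)) := by nlinarith [mul_nonneg hp hq]
  have hκ0 : 0 < κ := by linarith
  calc (1 + p) ^ (-N) * (1 + q) ^ (-N) = κ ^ N * (κ * ((1 + p) * (1 + q))) ^ (-N) := by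
        rw [Real.mul_rpow hκ0.le (by positivity), ← mul_assoc, ← Real.rpow_add hκ0,
          add_neg_cancel, Real.rpow_zero, one_mul, Real.mul_rpow (by positivity) (by positivity)]
    _ ≤ κ ^ N * (1 + σ) ^ (-N) :=
        mul_le_mul_of_nonneg_left (Real.rpow_le_rpow_of_nonpos (by positivity) hpq (by linarith))
          (by positivity)

theorem norm_mul_le_of_decay {E F R : Type*} [SeminormedAddCommGroup E]
    [SeminormedAddCommGroup F] [SeminormedRing R] {φ ψ : F → R} {f g : E → F}
    {Cφ Cψ c κ N r : ℝ} (hN : 0 ≤ N) (hr : 0 ≤ r) (hc : 0 ≤ c) (hκ : 1 ≤ κ)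
    (hφ : ∀ z, ‖φ z‖ ≤ Cφ * (1 + ‖z‖) ^ (-(N + r)))
    (hψ : ∀ z, ‖ψ z‖ ≤ Cψ * (1 + ‖z‖) ^ (-(N + r)))
    (hf : ∀ u, c * ‖u‖ ≤ κ * ‖f u‖) (hg : ∀ v, c * ‖v‖ ≤ κ * ‖g v‖) (u v : E) :
    ‖φ (f u) * ψ (g v)‖ ≤
      Cφ * Cψ * κ ^ N * (1 + c * ‖u + v‖) ^ (-N) * (1 + ‖f u‖) ^ (-r) := by
  have hCφ : 0 ≤ Cφ := by simpa using (norm_nonneg _).trans (hφ 0)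
  have hCψ : 0 ≤ Cψ := by simpa using (norm_nonneg _).trans (hψ 0)
  set p := ‖f u‖
  set q := ‖g v‖
  have hp1 : 0 < 1 + p := by positivity
  have hq1 : 1 ≤ 1 + q := by simp [q]
  have hσ : c * ‖u + v‖ ≤ κ * p + κ * q := by
    nlinarith [norm_add_le u v, hf u, hg v]
  have hfac : (1 + p) ^ (-(N + r)) = (1 + p) ^ (-N) * (1 + p) ^ (-r) := by
    rw [neg_add, Real.rpow_add hp1]
  have hq : (1 + q) ^ (-(N + r)) ≤ (1 + q) ^ (-N) :=
    Real.rpow_le_rpow_of_exponent_le hq1 (by linarith)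
  calc ‖φ (f u) * ψ (g v)‖ ≤ ‖φ (f u)‖ * ‖ψ (g v)‖ := norm_mul_le _ _
    _ ≤ (Cφ * (1 + p) ^ (-(N + r))) * (Cψ * (1 + q) ^ (-N)) := by
        refine mul_le_mul (hφ _) ((hψ _).trans ?_) (norm_nonneg _)
          ((norm_nonneg _).trans (hφ _))
        exact mul_le_mul_of_nonneg_left hq hCψ
    _ = Cφ * Cψ * ((1 + p) ^ (-N) * (1 + q) ^ (-N)) * (1 + p) ^ (-r) := by rw [hfac]; ring
    _ ≤ Cφ * Cψ * (κ ^ N * (1 + c * ‖u + v‖) ^ (-N)) * (1 + p) ^ (-r) := by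
        refine mul_le_mul_of_nonneg_right (mul_le_mul_of_nonneg_left ?_ ?_) (by positivity)
        · exact one_add_rpow_neg_mul_le (norm_nonneg _) (norm_nonneg _) (by positivity) hκ hN hσ
        · positivity
    _ = _ := by ring

theorem SchwartzMap.exists_norm_le_mul_one_add_norm_rpow_neg {E F : Type*}
    [NormedAddCommGroup E] [NormedSpace ℝ E] [NormedAddCommGroup F] [NormedSpace ℝ F]
    (f : SchwartzMap E F) (r : ℝ) : ∃ C, 0 ≤ C ∧ ∀ x, ‖f x‖ ≤ C * (1 + ‖x‖) ^ (-r) := by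
  set k := ⌈r⌉₊
  set C := 2 ^ k * (Finset.Iic (k, 0)).sup (fun m ↦ SchwartzMap.seminorm ℝ m.1 m.2) f
  refine ⟨C, by positivity, fun x ↦ ?_⟩
  have hx : 0 < 1 + ‖x‖ := by positivity
  have hf : (1 + ‖x‖) ^ k * ‖f x‖ ≤ C := by
    simpa using SchwartzMap.one_add_le_sup_seminorm_apply (𝕜 := ℝ) (m := (k, 0)) le_rfl le_rfl f x
  calc ‖f x‖ ≤ C * (1 + ‖x‖) ^ (-(k : ℝ)) := by
        rw [Real.rpow_neg hx.le, Real.rpow_natCast, ← div_eq_mul_inv, le_div_iff₀ (by positivity),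
          mul_comm]
        exact hf
    _ ≤ C * (1 + ‖x‖) ^ (-r) := by
        gcongr
        · simp
        · exact Nat.le_ceil r

theorem sqrt_mul_sqrt_mul_inv_le {X Y c : ℝ} (hX : 0 < X) (hc : 0 ≤ c) (h : Y ≤ c ^ 2 * X) :
    √X * √Y * X⁻¹ ≤ c := by
  have hsX : 0 < √X := Real.sqrt_pos.2 hX
  have hY : √Y ≤ c * √X := calc
    √Y ≤ √(c ^ 2 * X) := Real.sqrt_le_sqrt h
    _ = c * √X := by rw [Real.sqrt_mul (sq_nonneg c), Real.sqrt_sq hc]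
  calc √X * √Y * X⁻¹ = √Y / √X := by
        field_simp
        rw [Real.sq_sqrt hX.le, mul_comm]
    _ ≤ c := by rwa [div_le_iff₀ hsX]

section ShearDilate

variable {d : ℕ}

theorem integrable_one_add_norm_matVec_rpow_neg {M : Matrix (Fin d) (Fin d) ℝ} (hM : M.det ≠ 0)
    (a : EuclideanSpace ℝ (Fin d)) {r : ℝ} (hr : d < r) :
    Integrable (fun y ↦ (1 + ‖matVec M (y - a)‖) ^ (-r)) := by
  have hL : LinearMap.det (Matrix.toLpLin 2 2 M) ≠ 0 := by rwa [LinearMap.det_toLpLin]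
  have hr' : (Module.finrank ℝ (EuclideanSpace ℝ (Fin d)) : ℝ) < r := by simpa using hr
  rw [matVec_eq_toLpLin]
  exact ((integrable_comp_linearMap_iff volume hL).2
    (integrable_one_add_norm hr')).comp_sub_right a

theorem integral_one_add_norm_matVec_rpow_neg {M : Matrix (Fin d) (Fin d) ℝ} (hM : M.det ≠ 0)
    (a : EuclideanSpace ℝ (Fin d)) (r : ℝ) :
    ∫ y, (1 + ‖matVec M (y - a)‖) ^ (-r) =
      |M.det|⁻¹ * ∫ u : EuclideanSpace ℝ (Fin d), (1 + ‖u‖) ^ (-r) := by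
  have hL : LinearMap.det (Matrix.toLpLin 2 2 M) ≠ 0 := by rwa [LinearMap.det_toLpLin]
  rw [integral_sub_right_eq_self (fun y ↦ (1 + ‖matVec M y‖) ^ (-r)) a, matVec_eq_toLpLin,
    integral_comp_linearMap volume (fun u ↦ (1 + ‖u‖) ^ (-r)) hL, LinearMap.det_toLpLin,
    smul_eq_mul]

variable [NeZero d]

theorem isUnit_det_shearlet (j : ℕ) (ℓ : Fin d → ℤ) :
    IsUnit (shearletB d ℓ * shearletA d j).det := by
  rw [det_shearlet]
  exact isUnit_iff_ne_zero.2 (by positivity)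

theorem shearDilate_apply_eq (g : SchwartzMap (EuclideanSpace ℝ (Fin d)) ℂ) (j : ℕ)
    (ℓ k : Fin d → ℤ) (y : EuclideanSpace ℝ (Fin d)) :
    shearDilate g j ℓ k y = (√(2 ^ ((d + 1) * j)) : ℝ) * g (matVec (shearletB d ℓ * shearletA d j)
      (y - matVec (shearletB d ℓ * shearletA d j)⁻¹ (intVec d k))) := by
  rw [shearDilate, matVec_sub_eq (isUnit_det_shearlet j ℓ)]

theorem norm_shearDilate_mul_shearDilate_le {g h : SchwartzMap (EuclideanSpace ℝ (Fin d)) ℂ}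
    {Cg Ch N : ℝ} (hN : 0 ≤ N) (hg : ∀ z, ‖g z‖ ≤ Cg * (1 + ‖z‖) ^ (-(N + (d + 1))))
    (hh : ∀ z, ‖h z‖ ≤ Ch * (1 + ‖z‖) ^ (-(N + (d + 1)))) {j i : ℕ} (hij : i ≤ j + 1)
    {ℓ m : Fin d → ℤ} (hℓ : ∀ t : Fin d, t ≠ 0 → |ℓ t| ≤ 2 ^ j)
    (hm : ∀ t : Fin d, t ≠ 0 → |m t| ≤ 2 ^ i) (k n : Fin d → ℤ) (x y : EuclideanSpace ℝ (Fin d)) :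
    ‖shearDilate g j ℓ k y * shearDilate h i m n (x - y)‖ ≤
      √(2 ^ ((d + 1) * j)) * √(2 ^ ((d + 1) * i)) *
        (Cg * Ch * (2 * (√d * d)) ^ N * (1 + 2 ^ i *
          ‖x - matVec (shearletB d m * shearletA d i)⁻¹ (intVec d n) -
            matVec (shearletB d ℓ * shearletA d j)⁻¹ (intVec d k)‖) ^ (-N) *
        (1 + ‖matVec (shearletB d ℓ * shearletA d j)
          (y - matVec (shearletB d ℓ * shearletA d j)⁻¹ (intVec d k))‖) ^ (-((d : ℝ) + 1))) := by
  set a := matVec (shearletB d ℓ * shearletA d j)⁻¹ (intVec d k)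
  set b := matVec (shearletB d m * shearletA d i)⁻¹ (intVec d n)
  have hd : (1 : ℝ) ≤ √d * d := one_le_mul_of_one_le_of_one_le
    (Real.one_le_sqrt.2 (by exact_mod_cast NeZero.one_le)) (by exact_mod_cast NeZero.one_le)
  have h2i : (2 : ℝ) ^ i ≤ 2 * 2 ^ j := by
    rw [← pow_succ']; exact pow_le_pow_right₀ one_le_two hij
  have hT₁ (v : EuclideanSpace ℝ (Fin d)) :
      2 ^ i * ‖v‖ ≤ 2 * (√d * d) * ‖matVec (shearletB d ℓ * shearletA d j) v‖ := by
    have := two_pow_mul_norm_le_norm_matVec_shearlet hℓ v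
    nlinarith [norm_nonneg v]
  have hT₂ (v : EuclideanSpace ℝ (Fin d)) :
      2 ^ i * ‖v‖ ≤ 2 * (√d * d) * ‖matVec (shearletB d m * shearletA d i) v‖ := by
    have := two_pow_mul_norm_le_norm_matVec_shearlet hm v
    nlinarith [norm_nonneg (matVec (shearletB d m * shearletA d i) v)]
  have hsum : (y - a) + (x - y - b) = x - b - a := by abel
  have key := norm_mul_le_of_decay hN (by positivity) (by positivity) (by linarith) hg hh hT₁ hT₂
    (y - a) (x - y - b)
  rw [hsum] at key
  rw [shearDilate_apply_eq, shearDilate_apply_eq, mul_mul_mul_comm, norm_mul, ← Complex.ofReal_mul,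
    Complex.norm_real, Real.norm_of_nonneg (by positivity)]
  exact mul_le_mul_of_nonneg_left key (by positivity)

end ShearDilate

theorem conv_shearlets_decay_general (d : ℕ) [NeZero d]
    (g h : SchwartzMap (EuclideanSpace ℝ (Fin d)) ℂ) :
    ∀ N : ℝ, (d : ℝ) < N → ∃ C : ℝ, 0 < C ∧
      ∀ (j i : ℕ), (j : ℤ) - 1 ≤ (i : ℤ) → (i : ℤ) ≤ (j : ℤ) + 1 →
        ∀ (ℓ m : Fin d → ℤ), (∀ t : Fin d, t ≠ 0 → |ℓ t| ≤ 2 ^ j) →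
          (∀ t : Fin d, t ≠ 0 → |m t| ≤ 2 ^ i) →
          ∀ (k n : Fin d → ℤ) (x : EuclideanSpace ℝ (Fin d)),
            ‖∫ y : EuclideanSpace ℝ (Fin d),
                shearDilate g j ℓ k y * shearDilate h i m n (x - y)‖ ≤
              C * (1 + (2 : ℝ) ^ i *
                ‖x - matVec (shearletB d m * shearletA d i)⁻¹ (intVec d n) -
                  matVec (shearletB d ℓ * shearletA d j)⁻¹ (intVec d k)‖) ^ (-N) := by
  intro N hN
  obtain ⟨Cg, hCg, hg⟩ := g.exists_norm_le_mul_one_add_norm_rpow_neg (N + (d + 1))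
  obtain ⟨Ch, hCh, hh⟩ := h.exists_norm_le_mul_one_add_norm_rpow_neg (N + (d + 1))
  set I := ∫ u : EuclideanSpace ℝ (Fin d), (1 + ‖u‖) ^ (-((d : ℝ) + 1))
  set K := Cg * Ch * (2 * (√d * d)) ^ N
  refine ⟨max (2 ^ (d + 1) * (K * I)) 1, by positivity, ?_⟩
  intro j i _ hij ℓ m hℓ hm k n x
  set T := shearletB d ℓ * shearletA d j
  set R := (1 + (2 : ℝ) ^ i * ‖x - matVec (shearletB d m * shearletA d i)⁻¹ (intVec d n) -
    matVec T⁻¹ (intVec d k)‖) ^ (-N)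
  have hT : T.det ≠ 0 := (isUnit_det_shearlet j ℓ).ne_zero
  have hpt := norm_shearDilate_mul_shearDilate_le (by linarith [d.cast_nonneg (α := ℝ)]) hg hh
    (by omega) hℓ hm k n x
  have hscale : √(2 ^ ((d + 1) * j)) * √(2 ^ ((d + 1) * i)) * (2 ^ ((d + 1) * j) : ℝ)⁻¹ ≤
      2 ^ (d + 1) := sqrt_mul_sqrt_mul_inv_le (by positivity) (by positivity) (by
        rw [← pow_mul, ← pow_add]; exact pow_le_pow_right₀ one_le_two (by nlinarith))
  calc _ ≤ ∫ y, √(2 ^ ((d + 1) * j)) * √(2 ^ ((d + 1) * i)) *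
        (K * R * (1 + ‖matVec T (y - matVec T⁻¹ (intVec d k))‖) ^ (-((d : ℝ) + 1))) :=
        norm_integral_le_of_norm_le (((integrable_one_add_norm_matVec_rpow_neg hT _
          (by linarith)).const_mul _).const_mul _) (.of_forall hpt)
    _ = √(2 ^ ((d + 1) * j)) * √(2 ^ ((d + 1) * i)) * (2 ^ ((d + 1) * j) : ℝ)⁻¹ * (K * I) * R := by
        rw [integral_const_mul, integral_const_mul, integral_one_add_norm_matVec_rpow_neg hT,
          det_shearlet, abs_of_pos (by positivity)]
        ring
    _ ≤ max (2 ^ (d + 1) * (K * I)) 1 * R := by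
        have hI : 0 ≤ I := integral_nonneg fun u ↦ by positivity
        have hK : 0 ≤ K := by positivity
        gcongr
        exact (mul_le_mul_of_nonneg_right hscale (by positivity)).trans (le_max_left _ _)

/-- Almost orthogonality: decay of the convolution of two shear-dilated Schwartz
functions at neighbouring scales. -/
theorem conv_shearlets_decay (d : ℕ) [NeZero d] (hd : 2 ≤ d)
    (g h : SchwartzMap (EuclideanSpace ℝ (Fin d)) ℂ) :
    ∀ N : ℝ, (d : ℝ) < N → ∃ C : ℝ, 0 < C ∧
      ∀ (j i : ℕ), (j : ℤ) - 1 ≤ (i : ℤ) → (i : ℤ) ≤ (j : ℤ) + 1 →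
        ∀ (ℓ m : Fin d → ℤ), (∀ t : Fin d, t ≠ 0 → |ℓ t| ≤ 2 ^ j) →
          (∀ t : Fin d, t ≠ 0 → |m t| ≤ 2 ^ i) →
          ∀ (k n : Fin d → ℤ) (x : EuclideanSpace ℝ (Fin d)),
            ‖∫ y : EuclideanSpace ℝ (Fin d),
                shearDilate g j ℓ k y * shearDilate h i m n (x - y)‖ ≤
              C * (1 + (2 : ℝ) ^ i *
                ‖x - matVec (shearletB d m * shearletA d i)⁻¹ (intVec d n) -
                  matVec (shearletB d ℓ * shearletA d j)⁻¹ (intVec d k)‖) ^ (-N) :=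
  conv_shearlets_decay_general d g h
end
end

section
/- Let g ∈ S'(ℝ^d) with supp ĝ ⊆ {ξ : |ξ| ≤ R} for some R > 0, so g is smooth and slowly increasing. Define the Peetre maximal function g*_λ(x) = sup_{y∈ℝ^d} |g(x-y)| / (1+|y|)^{dλ} for λ > 0. Then for every multi-index α with |α| = 1 there exists C_λ > 0 (depending on λ, d, R) such that (∂^α g)*_λ(x) ≤ C_λ g*_λ(x) for all x ∈ ℝ^d. -/
open MeasureTheory ENNReal
open scoped RealInnerProductSpace
open scoped FourierTransform

set_option linter.unusedSectionVars false
set_option maxHeartbeats 1000000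

noncomputable section

/-- Peetre's maximal function `g*_λ(x) = sup_y |g(x-y)|/(1+|y|)^{dλ}` (valued in `ℝ≥0∞`). -/
def peetreMax (d : ℕ) (g : EuclideanSpace ℝ (Fin d) → ℂ) (lam : ℝ)
    (x : EuclideanSpace ℝ (Fin d)) : ℝ≥0∞ :=
  ⨆ y : EuclideanSpace ℝ (Fin d),
    (‖g (x - y)‖₊ : ℝ≥0∞) / ENNReal.ofReal ((1 + ‖y‖) ^ ((d : ℝ) * lam))

namespace PeetreAux

variable {D F : Type*} [NormedAddCommGroup D] [NormedSpace ℝ D]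
  [NormedAddCommGroup F] [NormedSpace ℝ F]

/-- A smooth compactly supported function is a Schwartz function. -/
def toSchwartzCS (f : D → F) (h1 : ContDiff ℝ ((⊤ : ℕ∞) : WithTop ℕ∞) f) (h2 : HasCompactSupport f) :
    SchwartzMap D F where
  toFun := f
  smooth' := h1
  decay' := by
    intro k n
    have hcont : Continuous fun x : D => ‖x‖ ^ k * ‖iteratedFDeriv ℝ n f x‖ :=
      ((continuous_norm.pow k).mul
        ((h1.continuous_iteratedFDeriv (by exact_mod_cast le_top)).norm))
    have hsupp : HasCompactSupport fun x : D => ‖x‖ ^ k * ‖iteratedFDeriv ℝ n f x‖ := by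
      have h3 : HasCompactSupport fun x : D => ‖iteratedFDeriv ℝ n f x‖ :=
        (h2.iteratedFDeriv n).comp_left (g := norm) norm_zero
      exact HasCompactSupport.mul_left h3
    obtain ⟨C, hC⟩ := hcont.bounded_above_of_compact_support hsupp
    refine ⟨C, fun x => ?_⟩
    have := hC x
    rwa [Real.norm_of_nonneg (by positivity)] at this

@[simp] lemma toSchwartzCS_apply (f : D → F) (h1 : ContDiff ℝ ((⊤ : ℕ∞) : WithTop ℕ∞) f)
    (h2 : HasCompactSupport f) (x : D) : toSchwartzCS f h1 h2 x = f x := rfl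

/-- A smooth compactly supported function has temperate growth. -/
lemma hasTemperateGrowth_of_hasCompactSupport {f : D → F} (h1 : ContDiff ℝ ((⊤ : ℕ∞) : WithTop ℕ∞) f)
    (h2 : HasCompactSupport f) : Function.HasTemperateGrowth f := by
  refine ⟨h1, fun n => ?_⟩
  have hcont : Continuous fun x : D => iteratedFDeriv ℝ n f x :=
    h1.continuous_iteratedFDeriv (by exact_mod_cast le_top)
  obtain ⟨C, hC⟩ := hcont.bounded_above_of_compact_support (h2.iteratedFDeriv n)
  exact ⟨0, C, fun x => by simpa using hC x⟩

/-- Polynomial decay of Schwartz functions with explicit nonnegative constant. -/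
lemma schwartz_decay (f : SchwartzMap D F) (k : ℕ) :
    ∃ C : ℝ, 0 ≤ C ∧ ∀ x, (1 + ‖x‖) ^ k * ‖f x‖ ≤ C := by
  refine ⟨2 ^ k * ((Finset.Iic (k, 0)).sup fun m => SchwartzMap.seminorm ℝ m.1 m.2) f, ?_, ?_⟩
  · positivity
  · intro x
    have := SchwartzMap.one_add_le_sup_seminorm_apply (𝕜 := ℝ) (m := (k, 0)) le_rfl le_rfl f x
    simpa [norm_iteratedFDeriv_zero] using this

/-- Peetre's inequality, basic form. -/
lemma one_add_norm_add_le (a b : D) :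
    1 + ‖a + b‖ ≤ (1 + ‖a‖) * (1 + ‖b‖) := by
  have := norm_add_le a b
  have ha := norm_nonneg a
  have hb := norm_nonneg b
  nlinarith

/-- Peetre's inequality with real exponents. -/
lemma peetre_rpow (a b : D) {p : ℝ} (hp : 0 ≤ p) :
    (1 + ‖a + b‖) ^ p ≤ (1 + ‖a‖) ^ p * (1 + ‖b‖) ^ p := by
  rw [← Real.mul_rpow (by positivity) (by positivity)]
  exact Real.rpow_le_rpow (by positivity) (one_add_norm_add_le a b) hp

lemma poly_div_aux (t B C : ℝ) (ht : 0 ≤ t) (m K : ℕ)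
    (h : (1 + t) ^ (m + K) * B ≤ C) : (1 + t) ^ m * B ≤ C * (1 + t) ^ (-(K : ℝ)) := by
  have h1 : (0:ℝ) < 1 + t := by linarith
  rw [Real.rpow_neg h1.le, Real.rpow_natCast, mul_comm C, inv_mul_eq_div,
    le_div_iff₀ (by positivity)]
  calc (1 + t) ^ m * B * (1 + t) ^ K = (1 + t) ^ (m + K) * B := by ring
  _ ≤ C := h

variable {d : ℕ}
local notation "𝔼" => EuclideanSpace ℝ (Fin d)

lemma integrable_rpow_neg_succ :
    Integrable (fun x : 𝔼 => (1 + ‖x‖) ^ (-((d : ℝ) + 1))) := by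
  have : ((Module.finrank ℝ 𝔼 : ℝ)) < (d : ℝ) + 1 := by
    rw [finrank_euclideanSpace_fin]; linarith
  exact integrable_one_add_norm this

/-- A function dominated by `(1+‖z‖)^{-(k+d+1)}` times growth `(1+‖z‖)^k` is integrable. -/
lemma integrable_growth_smul [NormedSpace ℂ F] (g : 𝔼 → ℂ) (hgc : Continuous g) (b : 𝔼 → F)
    (hbc : Continuous b) (k : ℕ) (Cg Cb : ℝ) (hCg : 0 ≤ Cg)
    (hg : ∀ z, ‖g z‖ ≤ Cg * (1 + ‖z‖) ^ k)
    (hb : ∀ z, (1 + ‖z‖) ^ (k + (d + 1)) * ‖b z‖ ≤ Cb) :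
    Integrable (fun z : 𝔼 => g z • b z) := by
  have hmeas : AEStronglyMeasurable (fun z : 𝔼 => g z • b z) volume :=
    (hgc.smul hbc).aestronglyMeasurable
  refine Integrable.mono' ((integrable_rpow_neg_succ (d := d)).const_mul (Cg * Cb)) hmeas
    (Filter.Eventually.of_forall fun z => ?_)
  have h2 : (1 + ‖z‖) ^ k * ‖b z‖ ≤ Cb * (1 + ‖z‖) ^ (-(((d + 1) : ℕ) : ℝ)) :=
    poly_div_aux _ _ _ (norm_nonneg z) k (d+1) (hb z)
  have h3 : ‖g z • b z‖ = ‖g z‖ * ‖b z‖ := norm_smul _ _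
  have h4 : ‖g z‖ * ‖b z‖ ≤ Cg * ((1 + ‖z‖) ^ k * ‖b z‖) := by
    rw [← mul_assoc]
    exact mul_le_mul_of_nonneg_right (hg z) (norm_nonneg _)
  have h5 : (-(((d + 1) : ℕ) : ℝ)) = -((d:ℝ)+1) := by push_cast; ring
  rw [h3]
  calc ‖g z‖ * ‖b z‖ ≤ Cg * ((1 + ‖z‖) ^ k * ‖b z‖) := h4
  _ ≤ Cg * (Cb * (1 + ‖z‖) ^ (-(((d+1) : ℕ) : ℝ))) :=
      mul_le_mul_of_nonneg_left h2 hCg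
  _ = Cg * Cb * (1 + ‖z‖) ^ (-((d:ℝ)+1)) := by rw [h5]; ring

/-- Uniform bound for shifted Schwartz functions. -/
lemma shift_bound (f : SchwartzMap 𝔼 F) (m : ℕ) :
    ∃ C : ℝ, 0 ≤ C ∧ ∀ x z : 𝔼, (1 + ‖z‖) ^ m * ‖f (x - z)‖ ≤ C * (1 + ‖x‖) ^ m := by
  obtain ⟨C, hC0, hC⟩ := schwartz_decay f m
  refine ⟨C, hC0, fun x z => ?_⟩
  have h1 : 1 + ‖z‖ ≤ (1 + ‖x‖) * (1 + ‖x - z‖) := by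
    have := one_add_norm_add_le x (-(x - z))
    simpa [norm_sub_rev z x] using this
  calc (1 + ‖z‖) ^ m * ‖f (x - z)‖
      ≤ ((1 + ‖x‖) * (1 + ‖x - z‖)) ^ m * ‖f (x - z)‖ :=
        mul_le_mul_of_nonneg_right (pow_le_pow_left₀ (by positivity) h1 m) (norm_nonneg _)
  _ = (1 + ‖x‖) ^ m * ((1 + ‖x - z‖) ^ m * ‖f (x - z)‖) := by rw [mul_pow]; ring
  _ ≤ (1 + ‖x‖) ^ m * C := mul_le_mul_of_nonneg_left (hC _) (by positivity)
  _ = C * (1 + ‖x‖) ^ m := by ring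




/-- Fundamental lemma: a continuous function whose integral against every Schwartz
function vanishes is identically zero. -/
lemma eq_zero_of_forall_integral_schwartz_eq_zero (h : 𝔼 → ℂ) (hc : Continuous h)
    (H : ∀ φ : SchwartzMap 𝔼 ℂ, (∫ x, h x * φ x) = 0) : ∀ x, h x = 0 := by
  intro x₀
  by_contra hx
  set c := h x₀ with hc0
  set u : 𝔼 → ℝ := fun x => ((starRingEnd ℂ) c * h x).re with hu
  have hcu : Continuous u := Complex.continuous_re.comp (continuous_const.mul hc)
  have hux₀ : u x₀ = Complex.normSq c := by
    simp only [hu, ← hc0, Complex.mul_re, Complex.conj_re, Complex.conj_im, Complex.normSq_apply]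
    ring
  have hpos : 0 < Complex.normSq c := Complex.normSq_pos.2 hx
  -- find a ball where u > normSq c / 2
  have : ∀ᶠ x in nhds x₀, u x > Complex.normSq c / 2 := by
    have : Set.Ioi (Complex.normSq c / 2) ∈ nhds (u x₀) := by
      rw [hux₀]
      exact Ioi_mem_nhds (by linarith)
    exact hcu.continuousAt.eventually_mem this
  obtain ⟨δ, hδ, hball⟩ := Metric.eventually_nhds_iff_ball.1 this
  set b : ContDiffBump x₀ := ⟨δ/2, δ, by linarith, by linarith⟩ with hbdef
  have hsm : ContDiff ℝ ((⊤ : ℕ∞) : WithTop ℕ∞) (fun x : 𝔼 => ((b x : ℝ) : ℂ)) :=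
    Complex.ofRealCLM.contDiff.comp b.contDiff
  have hcs : HasCompactSupport (fun x : 𝔼 => ((b x : ℝ) : ℂ)) := by
    simpa [Function.comp_def] using
      b.hasCompactSupport.comp_left (g := fun r : ℝ => (r : ℂ)) (by simp)
  set φ : SchwartzMap 𝔼 ℂ := toSchwartzCS (fun x => ((b x : ℝ) : ℂ)) hsm hcs with hφ
  have key : (∫ x, h x * φ x) = 0 := H φ
  have hint : Integrable (fun x => h x * ((b x : ℝ) : ℂ)) volume := by
    apply Continuous.integrable_of_hasCompactSupport
    · exact hc.mul (Complex.ofRealCLM.continuous.comp b.continuous)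
    · exact (b.hasCompactSupport.comp_left (g := fun r : ℝ => (r : ℂ)) (by simp)).mul_left
  have key2 : (∫ x, (starRingEnd ℂ) c * (h x * ((b x : ℝ) : ℂ))) = 0 := by
    rw [integral_const_mul]
    have : (∫ x, h x * φ x) = ∫ x, h x * ((b x : ℝ) : ℂ) := by rfl
    rw [this] at key
    rw [key, mul_zero]
  have key3 : (∫ x, u x * b x) = 0 := by
    have h1 := integral_re (hint.const_mul ((starRingEnd ℂ) c))
    rw [key2, map_zero] at h1
    rw [← h1]
    congr 1
    ext x
    simp only [hu, ← mul_assoc, RCLike.re_to_complex, Complex.mul_re, Complex.ofReal_re,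
      Complex.ofReal_im]
    ring
  -- lower bound
  have hlow : ∀ x, Complex.normSq c / 2 * b x ≤ u x * b x := by
    intro x
    rcases eq_or_lt_of_le (b.nonneg (x := x)) with hb0 | hb0
    · rw [← hb0]; simp
    · have hxball : x ∈ Metric.ball x₀ δ := by
        rw [← b.support_eq]
        exact Function.mem_support.2 (ne_of_gt hb0)
      exact mul_le_mul_of_nonneg_right (le_of_lt (hball x hxball)) b.nonneg
  have hint2 : Integrable (fun x => u x * b x) volume := by
    apply Continuous.integrable_of_hasCompactSupport (hcu.mul b.continuous)
    exact b.hasCompactSupport.mul_left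
  have hint3 : Integrable (fun x => Complex.normSq c / 2 * b x) volume :=
    b.integrable.const_mul _
  have hmono := integral_mono hint3 hint2 hlow
  rw [key3, integral_const_mul] at hmono
  have hbint : 0 < ∫ x, b x := b.integral_pos
  nlinarith


section Deriv

/-- Integrability of `z ↦ g z • f (x - z)` for Schwartz `f` and polynomially growing `g`. -/
lemma integrable_growth_smul_shift [NormedSpace ℂ F] (g : 𝔼 → ℂ) (hgc : Continuous g)
    (f : SchwartzMap 𝔼 F) (k : ℕ) (Cg : ℝ) (hCg : 0 ≤ Cg)
    (hg : ∀ z, ‖g z‖ ≤ Cg * (1 + ‖z‖) ^ k) (x : 𝔼) :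
    Integrable (fun z : 𝔼 => g z • f (x - z)) := by
  obtain ⟨Cb, hCb0, hCb⟩ := shift_bound f (k + (d + 1))
  exact integrable_growth_smul g hgc (fun z => f (x - z))
    (f.continuous.comp (continuous_const.sub continuous_id)) k Cg
    (Cb * (1 + ‖x‖) ^ (k + (d + 1))) hCg hg (fun z => hCb x z)

lemma hasFDerivAt_conv (γ : SchwartzMap 𝔼 ℂ) (g : 𝔼 → ℂ) (hgc : Continuous g)
    (k : ℕ) (Cg : ℝ) (hCg : 0 ≤ Cg) (hg : ∀ z, ‖g z‖ ≤ Cg * (1 + ‖z‖) ^ k) (x₀ : 𝔼) :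
    HasFDerivAt (fun x => ∫ z : 𝔼, g z • γ (x - z))
      (∫ z : 𝔼, g z • fderiv ℝ (⇑γ) (x₀ - z)) x₀ := by
  set γ₁ := SchwartzMap.fderivCLM ℝ 𝔼 ℂ γ with hγ₁
  have hγ₁app : ∀ w, γ₁ w = fderiv ℝ (⇑γ) w := fun w => rfl
  obtain ⟨Cb, hCb0, hCb⟩ := shift_bound γ₁ (k + (d + 1))
  have hcast : (-(((d + 1) : ℕ) : ℝ)) = -((d : ℝ) + 1) := by push_cast; ring
  set bound : 𝔼 → ℝ := fun z =>
    Cg * (Cb * (2 + ‖x₀‖) ^ (k + (d + 1))) * (1 + ‖z‖) ^ (-((d : ℝ) + 1)) with hbound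
  have hboundint : Integrable bound volume :=
    (integrable_rpow_neg_succ (d := d)).const_mul _
  have hptwise : ∀ z : 𝔼, ∀ x ∈ Metric.ball x₀ 1,
      ‖g z • γ₁ (x - z)‖ ≤ bound z := by
    intro z x hx
    have hxn : 1 + ‖x‖ ≤ 2 + ‖x₀‖ := by
      have : ‖x‖ ≤ ‖x₀‖ + 1 := by
        have := mem_ball_iff_norm.1 hx
        have h2 := norm_sub_norm_le x x₀
        linarith
      linarith
    have h1 : (1 + ‖z‖) ^ (k + (d + 1)) * ‖γ₁ (x - z)‖
        ≤ Cb * (2 + ‖x₀‖) ^ (k + (d + 1)) := by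
      refine (hCb x z).trans ?_
      exact mul_le_mul_of_nonneg_left (pow_le_pow_left₀ (by positivity) hxn _) hCb0
    have h2 := poly_div_aux (‖z‖) (‖γ₁ (x - z)‖) (Cb * (2 + ‖x₀‖) ^ (k + (d + 1)))
      (norm_nonneg z) k (d + 1) h1
    rw [hcast] at h2
    calc ‖g z • γ₁ (x - z)‖ ≤ ‖g z‖ * ‖γ₁ (x - z)‖ := norm_smul_le (g z) (γ₁ (x - z))
    _ ≤ (Cg * (1 + ‖z‖) ^ k) * ‖γ₁ (x - z)‖ :=
        mul_le_mul_of_nonneg_right (hg z) (norm_nonneg _)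
    _ = Cg * ((1 + ‖z‖) ^ k * ‖γ₁ (x - z)‖) := by ring
    _ ≤ Cg * (Cb * (2 + ‖x₀‖) ^ (k + (d + 1)) * (1 + ‖z‖) ^ (-((d : ℝ) + 1))) :=
        mul_le_mul_of_nonneg_left h2 hCg
    _ = bound z := by rw [hbound]; ring
  have hres := hasFDerivAt_integral_of_dominated_of_fderiv_le (𝕜 := ℝ)
    (F := fun (x : 𝔼) (z : 𝔼) => g z • γ (x - z))
    (F' := fun (x : 𝔼) (z : 𝔼) => g z • γ₁ (x - z)) (bound := bound)
    (x₀ := x₀) (s := Metric.ball x₀ 1) (Metric.ball_mem_nhds x₀ one_pos)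
    (Filter.Eventually.of_forall fun x =>
      ((hgc.smul (γ.continuous.comp (continuous_const.sub continuous_id)))).aestronglyMeasurable)
    (integrable_growth_smul_shift g hgc γ k Cg hCg hg x₀)
    ((hgc.smul (γ₁.continuous.comp (continuous_const.sub continuous_id))).aestronglyMeasurable)
    (Filter.Eventually.of_forall fun z => hptwise z)
    hboundint
    (Filter.Eventually.of_forall fun z => ?_)
  · simpa only [hγ₁app] using hres
  · intro x hx
    have hdγ : HasFDerivAt (⇑γ) (fderiv ℝ (⇑γ) (x - z)) (x - z) :=
      (((γ.smooth ⊤).differentiable (by simp)) (x - z)).hasFDerivAt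
    have htrans : HasFDerivAt (fun x : 𝔼 => x - z) (ContinuousLinearMap.id ℝ 𝔼) x :=
      (hasFDerivAt_id x).sub_const z
    have hcomp := hdγ.comp x htrans
    have : HasFDerivAt (fun x : 𝔼 => γ (x - z)) (fderiv ℝ (⇑γ) (x - z)) x := by
      exact hcomp
    exact this.const_smul (g z)

end Deriv


section Fourier

lemma integrable_one_add_pow_mul (f : SchwartzMap 𝔼 F) (k : ℕ) :
    Integrable (fun x : 𝔼 => (1 + ‖x‖) ^ k * ‖f x‖) := by
  obtain ⟨C, hC0, hC⟩ := schwartz_decay f (k + (d + 1))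
  have hcast : (-(((d + 1) : ℕ) : ℝ)) = -((d : ℝ) + 1) := by push_cast; ring
  refine Integrable.mono' ((integrable_rpow_neg_succ (d := d)).const_mul C)
    (((continuous_const.add continuous_norm).pow k).mul f.continuous.norm).aestronglyMeasurable
    (Filter.Eventually.of_forall fun x => ?_)
  rw [Real.norm_of_nonneg (by positivity)]
  have := poly_div_aux (‖x‖) (‖f x‖) C (norm_nonneg x) k (d + 1) (hC x)
  rwa [hcast] at this

/-- Fourier computation: pairing a shifted Schwartz function with a Fourier transform. -/
lemma conv_fourier (γ φ : SchwartzMap 𝔼 ℂ) (z : 𝔼) :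
    (∫ x : 𝔼, γ (x - z) * (𝓕 (⇑φ)) x) = 𝓕 (fun u => (𝓕 (⇑γ)) u * φ u) z := by
  have hker : Integrable (Function.uncurry fun (x : 𝔼) (u : 𝔼) =>
      γ (x - z) * ((𝐞 (-⟪u, x⟫) : Circle) • φ u)) ((volume : Measure 𝔼).prod volume) := by
    have hmaj : Integrable (fun p : 𝔼 × 𝔼 => ‖γ (p.1 - z)‖ * ‖φ p.2‖)
        ((volume : Measure 𝔼).prod volume) :=
      Integrable.mul_prod ((γ.integrable.norm).comp_sub_right z) (φ.integrable.norm)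
    refine hmaj.mono' ?_ (Filter.Eventually.of_forall fun p => ?_)
    · apply Continuous.aestronglyMeasurable
      refine ((γ.continuous.comp (continuous_fst.sub continuous_const))).mul ?_
      refine Continuous.smul ?_ (φ.continuous.comp continuous_snd)
      exact continuous_subtype_val.comp (Real.continuous_fourierChar.comp
        (((continuous_inner (𝕜 := ℝ) (E := 𝔼)).comp
          (continuous_snd.prodMk continuous_fst)).neg))
    · simp only [Function.uncurry, norm_mul, Circle.norm_smul, Real.norm_of_nonneg]
      exact le_of_eq rfl
  have h1 : ∀ x : 𝔼, (𝓕 (⇑φ)) x = ∫ u : 𝔼, (𝐞 (-⟪u, x⟫) : Circle) • φ u := fun x =>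
    Real.fourier_eq (⇑φ) x
  calc (∫ x : 𝔼, γ (x - z) * (𝓕 (⇑φ)) x)
      = ∫ x : 𝔼, ∫ u : 𝔼, γ (x - z) * ((𝐞 (-⟪u, x⟫) : Circle) • φ u) := by
        congr 1; ext x
        rw [h1 x]
        exact (integral_const_mul _ _).symm
    _ = ∫ u : 𝔼, ∫ x : 𝔼, γ (x - z) * ((𝐞 (-⟪u, x⟫) : Circle) • φ u) :=
        integral_integral_swap hker
    _ = ∫ u : 𝔼, (𝐞 (-⟪u, z⟫) : Circle) • ((𝓕 (⇑γ)) u * φ u) := by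
        congr 1; ext u
        have step1 : (∫ x : 𝔼, γ (x - z) * ((𝐞 (-⟪u, x⟫) : Circle) • φ u))
            = (∫ x : 𝔼, γ (x - z) * ((𝐞 (-⟪u, x⟫) : Circle) : ℂ)) * φ u := by
          rw [← integral_mul_const]
          congr 1; ext x
          rw [Circle.smul_def, smul_eq_mul]; ring
        have step2 : (∫ x : 𝔼, γ (x - z) * ((𝐞 (-⟪u, x⟫) : Circle) : ℂ))
            = ∫ w : 𝔼, γ w * ((𝐞 (-⟪u, w + z⟫) : Circle) : ℂ) := by
          rw [← integral_sub_right_eq_self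
            (fun w : 𝔼 => γ w * ((𝐞 (-⟪u, w + z⟫) : Circle) : ℂ)) z]
          congr 1; ext x
          simp [sub_add_cancel]
        have step3 : (∫ w : 𝔼, γ w * ((𝐞 (-⟪u, w + z⟫) : Circle) : ℂ))
            = ((𝐞 (-⟪u, z⟫) : Circle) : ℂ) * ∫ w : 𝔼, (𝐞 (-⟪w, u⟫) : Circle) • γ w := by
          rw [← integral_const_mul]
          congr 1; ext w
          have hinner : -⟪u, w + z⟫ = -⟪u, z⟫ + -⟪u, w⟫ := by
            rw [inner_add_right]; ring
          rw [hinner, AddChar.map_add_eq_mul, Circle.coe_mul, Circle.smul_def, smul_eq_mul,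
            real_inner_comm w u]
          ring
        rw [step1, step2, step3, ← Real.fourier_eq, Circle.smul_def, smul_eq_mul]
        ring
    _ = 𝓕 (fun u => (𝓕 (⇑γ)) u * φ u) z := (Real.fourier_eq _ z).symm

lemma fourierCLE_coe (f : SchwartzMap 𝔼 ℂ) :
    ⇑((SchwartzMap.fourierTransformCLE ℂ (SchwartzMap 𝔼 ℂ)) f) = 𝓕 ⇑f := rfl

end Fourier



section Pairing

/-- `g` multiplied by a Schwartz function is integrable. -/
lemma integrable_growth_mul (g : 𝔼 → ℂ) (hgc : Continuous g) (k : ℕ) (Cg : ℝ)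
    (hCg : 0 ≤ Cg) (hg : ∀ z, ‖g z‖ ≤ Cg * (1 + ‖z‖) ^ k) (F : SchwartzMap 𝔼 ℂ) :
    Integrable (fun x : 𝔼 => g x * F x) := by
  obtain ⟨C, hC0, hC⟩ := schwartz_decay F (k + (d + 1))
  have := integrable_growth_smul g hgc (⇑F) F.continuous k Cg C hCg hg hC
  simpa [smul_eq_mul] using this

lemma conv_pairing (γ : SchwartzMap 𝔼 ℂ) (g : 𝔼 → ℂ) (hgc : Continuous g)
    (k : ℕ) (Cg : ℝ) (hCg : 0 ≤ Cg) (hg : ∀ z, ‖g z‖ ≤ Cg * (1 + ‖z‖) ^ k)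
    (ψ : SchwartzMap 𝔼 ℂ) :
    Integrable (fun x : 𝔼 => (∫ z : 𝔼, g z • γ (x - z)) * ψ x) ∧
    (∫ x : 𝔼, (∫ z : 𝔼, g z • γ (x - z)) * ψ x)
      = ∫ z : 𝔼, g z * ∫ x : 𝔼, γ (x - z) * ψ x := by
  set A : 𝔼 → ℝ := fun w => (1 + ‖w‖) ^ k * ‖γ w‖ with hA
  set B : 𝔼 → ℝ := fun x => (1 + ‖x‖) ^ k * ‖ψ x‖ with hB
  have hAint : Integrable A := integrable_one_add_pow_mul γ k
  have hBint : Integrable B := integrable_one_add_pow_mul ψ k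
  have hAneg : Integrable (fun w : 𝔼 => A (-w)) := hAint.comp_neg
  have hBA : Integrable (fun p : 𝔼 × 𝔼 => B p.2 * A (-(p.1 - p.2)))
      ((volume : Measure 𝔼).prod volume) :=
    MeasureTheory.Integrable.convolution_integrand (ContinuousLinearMap.mul ℝ ℝ) hBint hAneg
  have hBA2 : Integrable (fun p : 𝔼 × 𝔼 => B p.1 * A (p.1 - p.2))
      ((volume : Measure 𝔼).prod volume) := by
    have := hBA.swap
    simpa [Function.comp_def, neg_sub] using this
  have hH : Integrable (Function.uncurry fun (x : 𝔼) (z : 𝔼) => (g z • γ (x - z)) * ψ x)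
      ((volume : Measure 𝔼).prod volume) := by
    refine (hBA2.const_mul Cg).mono' ?_ (Filter.Eventually.of_forall fun p => ?_)
    · exact (((hgc.comp continuous_snd).smul
        (γ.continuous.comp (continuous_fst.sub continuous_snd))).mul
        (ψ.continuous.comp continuous_fst)).aestronglyMeasurable
    · obtain ⟨x, z⟩ := p
      have h1 : 1 + ‖z‖ ≤ (1 + ‖x‖) * (1 + ‖x - z‖) := by
        have := one_add_norm_add_le x (-(x - z))
        simpa [norm_sub_rev z x] using this
      have h2 : (1 + ‖z‖) ^ k ≤ (1 + ‖x‖) ^ k * (1 + ‖x - z‖) ^ k := by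
        rw [← mul_pow]
        exact pow_le_pow_left₀ (by positivity) h1 k
      calc ‖(g z • γ (x - z)) * ψ x‖ = ‖g z‖ * ‖γ (x - z)‖ * ‖ψ x‖ := by
            rw [norm_mul, norm_smul]
      _ ≤ (Cg * (1 + ‖z‖) ^ k) * ‖γ (x - z)‖ * ‖ψ x‖ := by
            gcongr
            exact hg z
      _ ≤ (Cg * ((1 + ‖x‖) ^ k * (1 + ‖x - z‖) ^ k)) * ‖γ (x - z)‖ * ‖ψ x‖ := by
            gcongr
      _ = Cg * (B x * A (x - z)) := by rw [hA, hB]; ring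
  constructor
  · have := hH.integral_prod_left
    refine this.congr (Filter.Eventually.of_forall fun x => ?_)
    simp only [Function.uncurry]
    exact integral_mul_const _ _
  · have hswap := integral_integral_swap hH
    calc (∫ x : 𝔼, (∫ z : 𝔼, g z • γ (x - z)) * ψ x)
        = ∫ x : 𝔼, ∫ z : 𝔼, (g z • γ (x - z)) * ψ x := by
          congr 1; ext x
          exact (integral_mul_const _ _).symm
    _ = ∫ z : 𝔼, ∫ x : 𝔼, (g z • γ (x - z)) * ψ x := hswap
    _ = ∫ z : 𝔼, g z * ∫ x : 𝔼, γ (x - z) * ψ x := by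
          congr 1; ext z
          rw [← integral_const_mul]
          congr 1; ext x
          rw [smul_eq_mul]; ring

end Pairing

section Repr

/-- The reproducing representation: a band-limited tempered function equals its
convolution with a suitable Schwartz function. -/
lemma exists_repr (g : 𝔼 → ℂ) (R : ℝ) (hR : 0 < R) (hgc : Continuous g)
    (k : ℕ) (Cg : ℝ) (hCg : 0 ≤ Cg) (hg : ∀ z, ‖g z‖ ≤ Cg * (1 + ‖z‖) ^ k)
    (hg_supp : ∀ φ : SchwartzMap 𝔼 ℂ,
      Disjoint (tsupport ⇑φ) (Metric.closedBall 0 R) → (∫ x, g x * 𝓕 (⇑φ) x) = 0) :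
    ∃ γ : SchwartzMap 𝔼 ℂ, ∀ x, g x = ∫ z : 𝔼, g z • γ (x - z) := by
  -- the bump cutoff
  set χ : ContDiffBump (0 : 𝔼) := ⟨2*R, 3*R, by linarith, by linarith⟩ with hχdef
  have hsm : ContDiff ℝ ((⊤ : ℕ∞) : WithTop ℕ∞) (fun x : 𝔼 => ((χ x : ℝ) : ℂ)) :=
    Complex.ofRealCLM.contDiff.comp χ.contDiff
  have hcs : HasCompactSupport (fun x : 𝔼 => ((χ x : ℝ) : ℂ)) := by
    simpa [Function.comp_def] using
      χ.hasCompactSupport.comp_left (g := fun r : ℝ => (r : ℂ)) (by simp)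
  set χc : SchwartzMap 𝔼 ℂ := toSchwartzCS (fun x => ((χ x : ℝ) : ℂ)) hsm hcs with hχc
  set γ : SchwartzMap 𝔼 ℂ := (SchwartzMap.fourierTransformCLE ℂ (SchwartzMap 𝔼 ℂ)).symm χc with hγ
  have hγF : 𝓕 (⇑γ) = ⇑χc := by
    rw [← fourierCLE_coe γ, hγ,
      ContinuousLinearEquiv.apply_symm_apply]
  refine ⟨γ, ?_⟩
  set G : 𝔼 → ℂ := fun x => ∫ z : 𝔼, g z • γ (x - z) with hG
  have hGc : Continuous G := by
    rw [continuous_iff_continuousAt]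
    exact fun x => (hasFDerivAt_conv γ g hgc k Cg hCg hg x).continuousAt
  have χtemp : Function.HasTemperateGrowth (fun x : 𝔼 => ((χ x : ℝ) : ℂ)) :=
    hasTemperateGrowth_of_hasCompactSupport hsm hcs
  -- the key distributional identity
  have claim : ∀ ψ : SchwartzMap 𝔼 ℂ, (∫ x, (g x - G x) * ψ x) = 0 := by
    intro ψ
    set φ : SchwartzMap 𝔼 ℂ := (SchwartzMap.fourierTransformCLE ℂ (SchwartzMap 𝔼 ℂ)).symm ψ with hφdef
    have hφF : 𝓕 (⇑φ) = ⇑ψ := by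
      rw [← fourierCLE_coe φ, hφdef,
        ContinuousLinearEquiv.apply_symm_apply]
    set P : SchwartzMap 𝔼 ℂ :=
      SchwartzMap.bilinLeftCLM (ContinuousLinearMap.mul ℝ ℂ) χtemp φ with hP
    have hPapp : ∀ u, P u = φ u * ((χ u : ℝ) : ℂ) := fun u => rfl
    set φ' : SchwartzMap 𝔼 ℂ := φ - P with hφ'
    have htsupp : Disjoint (tsupport ⇑φ') (Metric.closedBall 0 R) := by
      have hsupp1 : Function.support ⇑φ' ⊆ (Metric.ball (0:𝔼) (2*R))ᶜ := by
        intro x hx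
        simp only [Set.mem_compl_iff]
        intro hmem
        apply hx
        have hone : χ x = 1 := χ.one_of_mem_closedBall (Metric.ball_subset_closedBall hmem)
        simp [hφ', SchwartzMap.sub_apply, hPapp, hone]
      have h2 : tsupport ⇑φ' ⊆ (Metric.ball (0:𝔼) (2*R))ᶜ :=
        closure_minimal hsupp1 Metric.isOpen_ball.isClosed_compl
      refine Set.disjoint_left.2 fun x hx hx2 => ?_
      exact (h2 hx) (Metric.closedBall_subset_ball (by linarith) hx2)
    have hzero := hg_supp φ' htsupp
    have hFφ' : 𝓕 (⇑φ') = fun x => ψ x - 𝓕 (⇑P) x := by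
      have e1 : 𝓕 (⇑φ') = ⇑((SchwartzMap.fourierTransformCLE ℂ (SchwartzMap 𝔼 ℂ)) φ') :=
        (fourierCLE_coe φ').symm
      have e2 : (SchwartzMap.fourierTransformCLE ℂ (SchwartzMap 𝔼 ℂ)) φ'
          = (SchwartzMap.fourierTransformCLE ℂ (SchwartzMap 𝔼 ℂ)) φ - (SchwartzMap.fourierTransformCLE ℂ (SchwartzMap 𝔼 ℂ)) P := by
        rw [hφ']; exact map_sub _ _ _
      ext x
      rw [e1, e2]
      have e3 : ⇑((SchwartzMap.fourierTransformCLE ℂ (SchwartzMap 𝔼 ℂ)) φ) = 𝓕 (⇑φ) :=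
        fourierCLE_coe φ
      have e4 : ⇑((SchwartzMap.fourierTransformCLE ℂ (SchwartzMap 𝔼 ℂ)) P) = 𝓕 (⇑P) :=
        fourierCLE_coe P
      simp only [SchwartzMap.sub_apply, e3, e4, hφF]
    -- both parts integrable
    have hFP : SchwartzMap 𝔼 ℂ := (SchwartzMap.fourierTransformCLE ℂ (SchwartzMap 𝔼 ℂ)) P
    have hint1 : Integrable (fun x : 𝔼 => g x * ψ x) :=
      integrable_growth_mul g hgc k Cg hCg hg ψ
    have hint2 : Integrable (fun x : 𝔼 => g x * 𝓕 (⇑P) x) := by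
      have := integrable_growth_mul g hgc k Cg hCg hg
        ((SchwartzMap.fourierTransformCLE ℂ (SchwartzMap 𝔼 ℂ)) P)
      have e4 : ⇑((SchwartzMap.fourierTransformCLE ℂ (SchwartzMap 𝔼 ℂ)) P) = 𝓕 (⇑P) :=
        fourierCLE_coe P
      rwa [e4] at this
    have hsplit : (∫ x, g x * 𝓕 (⇑φ') x)
        = (∫ x, g x * ψ x) - ∫ x, g x * 𝓕 (⇑P) x := by
      rw [← integral_sub hint1 hint2]
      congr 1; ext x
      rw [hFφ']
      ring
    have heq1 : (∫ x, g x * ψ x) = ∫ x, g x * 𝓕 (⇑P) x := by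
      rw [hsplit] at hzero
      exact sub_eq_zero.1 hzero
    -- identify ∫ G ψ with ∫ g 𝓕P
    obtain ⟨hGψint, hGψ⟩ := conv_pairing γ g hgc k Cg hCg hg ψ
    have hinner : ∀ z : 𝔼, (∫ x : 𝔼, γ (x - z) * ψ x) = 𝓕 (⇑P) z := by
      intro z
      have := conv_fourier γ φ z
      rw [hφF] at this
      rw [this]
      refine congrArg (fun f : 𝔼 → ℂ => 𝓕 f z) ?_
      ext u
      rw [hγF, hPapp]
      exact mul_comm _ _
    have hGψ2 : (∫ x : 𝔼, G x * ψ x) = ∫ x, g x * 𝓕 (⇑P) x := by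
      rw [hG]
      rw [hGψ]
      congr 1; ext z
      rw [hinner z]
    have hGψint' : Integrable (fun x : 𝔼 => G x * ψ x) := hGψint
    have hfinal : (∫ x, (g x - G x) * ψ x)
        = (∫ x, g x * ψ x) - ∫ x, G x * ψ x := by
      rw [← integral_sub hint1 hGψint']
      congr 1; ext x; ring
    rw [hfinal, heq1, hGψ2, sub_self]
  -- conclude pointwise equality
  intro x
  have hzero := eq_zero_of_forall_integral_schwartz_eq_zero (fun x => g x - G x)
    (hgc.sub hGc) claim x
  have := sub_eq_zero.1 hzero
  exact this

end Repr

end PeetreAux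

lemma ofReal_norm_eq_coe_nnnorm {E : Type*} [SeminormedAddCommGroup E] (a : E) :
    ENNReal.ofReal ‖a‖ = (‖a‖₊ : ℝ≥0∞) := by
  rw [← coe_nnnorm, ENNReal.ofReal_coe_nnreal]

/-- If `g ∈ S'` has Fourier support in the ball of radius `R`, then the Peetre maximal
function of any first-order partial derivative of `g` is dominated by that of `g`. -/
theorem peetreMax_fderiv_le (d : ℕ) [NeZero d] (hd : 2 ≤ d)
    (g : EuclideanSpace ℝ (Fin d) → ℂ) (R : ℝ) (hR : 0 < R)
    (hg_smooth : ContDiff ℝ (⊤ : ℕ∞) g) (hg_growth : Function.HasTemperateGrowth g)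
    (hg_supp : ∀ φ : SchwartzMap (EuclideanSpace ℝ (Fin d)) ℂ,
      Disjoint (tsupport ⇑φ) (Metric.closedBall 0 R) → (∫ x, g x * 𝓕 (⇑φ) x) = 0)
    (lam : ℝ) (hlam : 0 < lam) :
    ∃ C : ℝ, 0 < C ∧ ∀ (i : Fin d) (x : EuclideanSpace ℝ (Fin d)),
      peetreMax d (fun z => fderiv ℝ g z (EuclideanSpace.single i 1)) lam x ≤
        ENNReal.ofReal C * peetreMax d g lam x := by
  classical
  have hgc : Continuous g := hg_smooth.continuous
  obtain ⟨k, Cg, hCg0, hgb'⟩ := hg_growth.norm_iteratedFDeriv_le_uniform 0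
  have hgb : ∀ z : EuclideanSpace ℝ (Fin d), ‖g z‖ ≤ Cg * (1 + ‖z‖) ^ k := fun z => by
    simpa [norm_iteratedFDeriv_zero] using hgb' 0 le_rfl z
  obtain ⟨γ, hrepr⟩ := PeetreAux.exists_repr g R hR hgc k Cg hCg0 hgb hg_supp
  set γ₁ := SchwartzMap.fderivCLM ℝ (EuclideanSpace ℝ (Fin d)) ℂ γ with hγ₁def
  have hγ₁app : ∀ w, γ₁ w = fderiv ℝ (⇑γ) w := fun w => rfl
  -- the derivative formula
  have hder : ∀ u : EuclideanSpace ℝ (Fin d), fderiv ℝ g u = ∫ z : EuclideanSpace ℝ (Fin d), g z • fderiv ℝ (⇑γ) (u - z) := by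
    intro u
    have hGder := PeetreAux.hasFDerivAt_conv γ g hgc k Cg hCg0 hgb u
    rw [← funext hrepr] at hGder
    exact hGder.fderiv
  have hΦint : ∀ u : EuclideanSpace ℝ (Fin d), Integrable (fun z : EuclideanSpace ℝ (Fin d) => g z • γ₁ (u - z)) :=
    fun u => PeetreAux.integrable_growth_smul_shift g hgc γ₁ k Cg hCg0 hgb u
  -- the constant
  set m := ⌈(d : ℝ) * lam⌉₊ with hm
  have hdl0 : 0 ≤ (d : ℝ) * lam := by positivity
  have hIint : Integrable (fun w : EuclideanSpace ℝ (Fin d) => ‖γ₁ w‖ * (1 + ‖w‖) ^ ((d : ℝ) * lam)) := by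
    refine (PeetreAux.integrable_one_add_pow_mul γ₁ m).mono'
      ((γ₁.continuous.norm.mul
        (((continuous_const.add continuous_norm).rpow_const
          (fun x => Or.inr hdl0)))).aestronglyMeasurable)
      (Filter.Eventually.of_forall fun w => ?_)
    have h1 : (0:ℝ) < 1 + ‖w‖ := by positivity
    have h2 : (1 + ‖w‖) ^ ((d : ℝ) * lam) ≤ (1 + ‖w‖) ^ (m : ℕ) := by
      rw [← Real.rpow_natCast (1 + ‖w‖) m]
      exact Real.rpow_le_rpow_of_exponent_le (by linarith [norm_nonneg w]) (Nat.le_ceil _)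
    rw [Real.norm_of_nonneg (by positivity)]
    calc ‖γ₁ w‖ * (1 + ‖w‖) ^ ((d : ℝ) * lam) ≤ ‖γ₁ w‖ * (1 + ‖w‖) ^ (m : ℕ) :=
          mul_le_mul_of_nonneg_left h2 (norm_nonneg _)
    _ = (1 + ‖w‖) ^ (m : ℕ) * ‖γ₁ w‖ := mul_comm _ _
  set C₀ : ℝ := (∫ w : EuclideanSpace ℝ (Fin d), ‖γ₁ w‖ * (1 + ‖w‖) ^ ((d : ℝ) * lam)) + 1 with hC₀
  have hInonneg : 0 ≤ ∫ w : EuclideanSpace ℝ (Fin d), ‖γ₁ w‖ * (1 + ‖w‖) ^ ((d : ℝ) * lam) :=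
    integral_nonneg fun w => by positivity
  have hC₀pos : 0 < C₀ := by rw [hC₀]; linarith
  refine ⟨C₀, hC₀pos, fun i x => ?_⟩
  set e : EuclideanSpace ℝ (Fin d) := EuclideanSpace.single i (1:ℝ) with he
  have hnorme : ‖e‖ = 1 := by simp [he]
  have hSdef : peetreMax d g lam x
      = ⨆ y : EuclideanSpace ℝ (Fin d), (‖g (x - y)‖₊ : ℝ≥0∞)
          / ENNReal.ofReal ((1 + ‖y‖) ^ ((d : ℝ) * lam)) := rfl
  have hDdef : peetreMax d (fun z => fderiv ℝ g z e) lam x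
      = ⨆ y : EuclideanSpace ℝ (Fin d), (‖fderiv ℝ g (x - y) e‖₊ : ℝ≥0∞)
          / ENNReal.ofReal ((1 + ‖y‖) ^ ((d : ℝ) * lam)) := rfl
  set S : ℝ≥0∞ := peetreMax d g lam x with hS
  by_cases hStop : S = ⊤
  · rw [hStop, ENNReal.mul_top ((ENNReal.ofReal_pos.2 hC₀pos).ne')]
    exact le_top
  -- the finite case
  have hM0 : 0 ≤ S.toReal := ENNReal.toReal_nonneg
  have hMle : ∀ y' : EuclideanSpace ℝ (Fin d),
      ‖g (x - y')‖ ≤ S.toReal * (1 + ‖y'‖) ^ ((d : ℝ) * lam) := by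
    intro y'
    have hP : (0:ℝ) < (1 + ‖y'‖) ^ ((d : ℝ) * lam) :=
      Real.rpow_pos_of_pos (by positivity) _
    have hterm : (‖g (x - y')‖₊ : ℝ≥0∞)
        / ENNReal.ofReal ((1 + ‖y'‖) ^ ((d : ℝ) * lam)) ≤ S := by
      rw [hSdef]
      exact le_iSup (fun y : EuclideanSpace ℝ (Fin d) => (‖g (x - y)‖₊ : ℝ≥0∞) /
        ENNReal.ofReal ((1 + ‖y‖) ^ ((d : ℝ) * lam))) y'
    rw [ENNReal.div_le_iff (ENNReal.ofReal_pos.2 hP).ne' ENNReal.ofReal_ne_top] at hterm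
    have hSr : S = ENNReal.ofReal S.toReal := (ENNReal.ofReal_toReal hStop).symm
    rw [hSr, ← ENNReal.ofReal_mul hM0, ← ofReal_norm_eq_coe_nnnorm] at hterm
    exact (ENNReal.ofReal_le_ofReal_iff (by positivity)).1 hterm
  -- pointwise bound on the derivative
  have hb : ∀ y : EuclideanSpace ℝ (Fin d), ‖fderiv ℝ g (x - y) e‖
      ≤ (S.toReal * C₀) * (1 + ‖y‖) ^ ((d : ℝ) * lam) := by
    intro y
    set u : EuclideanSpace ℝ (Fin d) := x - y with hu
    have hval : fderiv ℝ g u e = ∫ w : EuclideanSpace ℝ (Fin d), g (u - w) * (γ₁ w e) := by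
      rw [hder u]
      have h1 : (∫ z : EuclideanSpace ℝ (Fin d), g z • fderiv ℝ (⇑γ) (u - z)) e
          = ∫ z : EuclideanSpace ℝ (Fin d), (g z • γ₁ (u - z)) e := by
        have := ContinuousLinearMap.integral_apply (𝕜 := ℝ) (hΦint u) e
        simpa [hγ₁app] using this
      rw [h1, ← integral_sub_left_eq_self (fun w : EuclideanSpace ℝ (Fin d) => g (u - w) * (γ₁ w e)) volume u]
      congr 1; ext z
      simp [_root_.sub_sub_cancel, smul_eq_mul]
    rw [hval]
    have hmono : (∫ w : EuclideanSpace ℝ (Fin d), ‖g (u - w) * (γ₁ w e)‖)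
        ≤ ∫ w : EuclideanSpace ℝ (Fin d), (S.toReal * (1 + ‖y‖) ^ ((d : ℝ) * lam))
            * (‖γ₁ w‖ * (1 + ‖w‖) ^ ((d : ℝ) * lam)) := by
      refine integral_mono_of_nonneg (Filter.Eventually.of_forall fun w => norm_nonneg _)
        (hIint.const_mul _) (Filter.Eventually.of_forall fun w => ?_)
      have huw : u - w = x - (y + w) := by rw [hu]; abel
      have h1 : ‖g (u - w)‖ ≤ S.toReal * (1 + ‖y + w‖) ^ ((d : ℝ) * lam) := by
        rw [huw]; exact hMle (y + w)
      have h2 : ‖γ₁ w e‖ ≤ ‖γ₁ w‖ := by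
        have := (γ₁ w).le_opNorm e
        rwa [hnorme, mul_one] at this
      have h3 : (1 + ‖y + w‖) ^ ((d : ℝ) * lam)
          ≤ (1 + ‖y‖) ^ ((d : ℝ) * lam) * (1 + ‖w‖) ^ ((d : ℝ) * lam) :=
        PeetreAux.peetre_rpow y w hdl0
      calc ‖g (u - w) * (γ₁ w e)‖ = ‖g (u - w)‖ * ‖γ₁ w e‖ := norm_mul _ _
      _ ≤ (S.toReal * (1 + ‖y + w‖) ^ ((d : ℝ) * lam)) * ‖γ₁ w‖ :=
          mul_le_mul h1 h2 (norm_nonneg _) (by positivity)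
      _ ≤ (S.toReal * ((1 + ‖y‖) ^ ((d : ℝ) * lam) * (1 + ‖w‖) ^ ((d : ℝ) * lam))) * ‖γ₁ w‖ := by
          have := mul_le_mul_of_nonneg_left h3 hM0
          exact mul_le_mul_of_nonneg_right this (norm_nonneg _)
      _ = (S.toReal * (1 + ‖y‖) ^ ((d : ℝ) * lam))
            * (‖γ₁ w‖ * (1 + ‖w‖) ^ ((d : ℝ) * lam)) := by ring
    calc ‖∫ w : EuclideanSpace ℝ (Fin d), g (u - w) * (γ₁ w e)‖ ≤ ∫ w : EuclideanSpace ℝ (Fin d), ‖g (u - w) * (γ₁ w e)‖ :=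
          norm_integral_le_integral_norm _
    _ ≤ ∫ w : EuclideanSpace ℝ (Fin d), (S.toReal * (1 + ‖y‖) ^ ((d : ℝ) * lam))
          * (‖γ₁ w‖ * (1 + ‖w‖) ^ ((d : ℝ) * lam)) := hmono
    _ = (S.toReal * (1 + ‖y‖) ^ ((d : ℝ) * lam))
          * ∫ w : EuclideanSpace ℝ (Fin d), ‖γ₁ w‖ * (1 + ‖w‖) ^ ((d : ℝ) * lam) := integral_const_mul _ _
    _ ≤ (S.toReal * (1 + ‖y‖) ^ ((d : ℝ) * lam)) * C₀ := by
          refine mul_le_mul_of_nonneg_left ?_ (by positivity)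
          rw [hC₀]; linarith
    _ = (S.toReal * C₀) * (1 + ‖y‖) ^ ((d : ℝ) * lam) := by ring
  -- conclude in ℝ≥0∞
  have hsup : peetreMax d (fun z => fderiv ℝ g z e) lam x ≤ ENNReal.ofReal (S.toReal * C₀) := by
    rw [hDdef]
    refine iSup_le fun y => ?_
    have hP : (0:ℝ) < (1 + ‖y‖) ^ ((d : ℝ) * lam) := Real.rpow_pos_of_pos (by positivity) _
    rw [ENNReal.div_le_iff (ENNReal.ofReal_pos.2 hP).ne' ENNReal.ofReal_ne_top]
    calc (‖fderiv ℝ g (x - y) e‖₊ : ℝ≥0∞)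
        = ENNReal.ofReal ‖fderiv ℝ g (x - y) e‖ := (ofReal_norm_eq_coe_nnnorm _).symm
    _ ≤ ENNReal.ofReal ((S.toReal * C₀) * ((1 + ‖y‖) ^ ((d : ℝ) * lam))) :=
        ENNReal.ofReal_le_ofReal (hb y)
    _ = ENNReal.ofReal (S.toReal * C₀)
          * ENNReal.ofReal ((1 + ‖y‖) ^ ((d : ℝ) * lam)) :=
        ENNReal.ofReal_mul (mul_nonneg hM0 hC₀pos.le)
  refine hsup.trans ?_
  rw [mul_comm S.toReal C₀, ENNReal.ofReal_mul hC₀pos.le, ENNReal.ofReal_toReal hStop]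
end
end

section
/- Let s ∈ ℝ, 0 < q₀, q₁ ≤ ∞, 0 < p ≤ ∞, and ε > (d-1)/((d+1)q₀). Then the shear anisotropic Besov spaces satisfy B^{s+ε, q₁}_p(AB) ↪ B^{s, q₀}_p(AB). In particular, the key inequality is: (∑_{𝔡=1}^d ∑_{j≥0} ∑_{|[ℓ]|⪯2^j} [2^{(d+1)js} a_{𝔡,j,ℓ}]^{q₀})^{1/q₀} ≤ C_{ε,q₀,d} sup_{𝔡,j,ℓ} 2^{(d+1)j(s+ε)} a_{𝔡,j,ℓ}, for any nonnegative reals a_{𝔡,j,ℓ}, where the constant uses the convergence of ∑_{j≥0} 2^{-j((d+1)εq₀ - (d-1))} and the fact that the number of shear parameters ℓ with |ℓ_i| ≤ 2^j for i = 1,…,d-1 is (2^{j+1}+1)^{d-1} ≲ 2^{j(d-1)}. -/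
/-!
Each term `2^{(d+1)js} a_{𝔡,j,ℓ}` is at most `2^{-(d+1)jε} M`, where `M` is the supremum on the
right. At scale `j` there are `(2^{j+1}+1)^{d-1} ≤ 4^{d-1} (2^{d-1})^j` shear parameters, so the
`q₀`-th power of the left side is at most `d · 4^{d-1} · ∑_j (2^{(d-1) - (d+1)εq₀})^j · M^{q₀}`,
a geometric series with ratio `< 1` exactly when `ε > (d-1)/((d+1)q₀)`.
-/

open ENNReal

noncomputable section

namespace ShearBesov

open scoped Finset

lemma card_Icc_neg_two_pow_le {ι : Type*} [Fintype ι] [DecidableEq ι] (j : ℕ) :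
    #(Finset.Icc (fun _ : ι => -(2 ^ j : ℤ)) (fun _ => 2 ^ j)) ≤
      4 ^ Fintype.card ι * (2 ^ Fintype.card ι) ^ j := by
  have h_one_dim : #(Finset.Icc (-(2 ^ j : ℤ)) (2 ^ j)) ≤ 2 ^ (j + 2) := by
    rw [Int.card_Icc, Int.toNat_le]
    push_cast
    have : (1 : ℤ) ≤ 2 ^ j := one_le_pow₀ (by norm_num)
    ring_nf
    omega
  rw [Pi.card_Icc, Finset.prod_const, Finset.card_univ]
  calc _ ≤ (2 ^ (j + 2)) ^ Fintype.card ι := Nat.pow_le_pow_left h_one_dim _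
    _ = 4 ^ Fintype.card ι * (2 ^ Fintype.card ι) ^ j := by ring

lemma rpow_mul_le_of_rpow_add_mul_le {b x M : ℝ≥0∞} (hb₀ : b ≠ 0) (hb : b ≠ ∞) {t u q : ℝ}
    (hq : 0 ≤ q) (h : b ^ (t + u) * x ≤ M) : (b ^ t * x) ^ q ≤ b ^ (-u * q) * M ^ q := by
  have hsplit : b ^ t = b ^ (-u) * b ^ (t + u) := by
    rw [← ENNReal.rpow_add _ _ hb₀ hb]
    ring_nf
  calc (b ^ t * x) ^ q ≤ (b ^ (-u) * M) ^ q := by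
        rw [hsplit, mul_assoc]
        gcongr
    _ = b ^ (-u * q) * M ^ q := by
        rw [ENNReal.mul_rpow_of_nonneg _ _ hq, ← ENNReal.rpow_mul]

lemma tsum_sum_le_of_card_le_of_le {κ : Type*} (S : ℕ → Finset κ) (b : ℕ → κ → ℝ≥0∞)
    {A ρ r M : ℝ≥0∞} (hS : ∀ j, (#(S j) : ℝ≥0∞) ≤ A * ρ ^ j)
    (hb : ∀ j, ∀ ℓ ∈ S j, b j ℓ ≤ r ^ j * M) :
    ∑' j, ∑ ℓ ∈ S j, b j ℓ ≤ A * (1 - ρ * r)⁻¹ * M := by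
  have hscale : ∀ j, ∑ ℓ ∈ S j, b j ℓ ≤ A * (ρ * r) ^ j * M := fun j =>
    calc ∑ ℓ ∈ S j, b j ℓ ≤ #(S j) * (r ^ j * M) := by
          rw [← nsmul_eq_mul]
          exact Finset.sum_le_card_nsmul _ _ _ (hb j)
      _ ≤ A * ρ ^ j * (r ^ j * M) := by gcongr; exact hS j
      _ = A * (ρ * r) ^ j * M := by ring
  calc ∑' j, ∑ ℓ ∈ S j, b j ℓ ≤ ∑' j, A * (ρ * r) ^ j * M := ENNReal.tsum_le_tsum hscale
    _ = A * (1 - ρ * r)⁻¹ * M := by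
        rw [ENNReal.tsum_mul_right, ENNReal.tsum_mul_left, ENNReal.tsum_geometric]

/-- The constant of the embedding: `m` is the number of shear coordinates and `c` the exponent
of the scale weight `|Q_j|^{-1} = 2^{cj}`. It is `∞` unless `m < cεq`, since the subtraction
truncates at `0` and `0⁻¹ = ∞`. -/
def embeddingConst (ι : Type*) [Fintype ι] (m : ℕ) (c ε q : ℝ) : ℝ≥0∞ :=
  (Fintype.card ι * 4 ^ m * (1 - 2 ^ m * 2 ^ (-(c * ε * q)))⁻¹) ^ (1 / q)

lemma embeddingConst_ne_top (ι : Type*) [Fintype ι] {m : ℕ} {c ε q : ℝ} (hq : 0 < q)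
    (hε : (m : ℝ) < c * ε * q) : embeddingConst ι m c ε q ≠ ∞ := by
  have hratio : (2 : ℝ≥0∞) ^ m * 2 ^ (-(c * ε * q)) < 1 := by
    rw [← ENNReal.rpow_natCast, ← ENNReal.rpow_add _ _ (by norm_num) (by norm_num)]
    exact ENNReal.rpow_lt_one_of_one_lt_of_neg (by norm_num) (by linarith)
  refine ENNReal.rpow_ne_top_of_nonneg (by positivity) (ENNReal.mul_ne_top (by finiteness) ?_)
  simpa using (tsub_pos_of_lt hratio).ne'

theorem lq_sum_le_embeddingConst_mul_iSup {ι : Type*} [Fintype ι] (m : ℕ) (c s ε q : ℝ)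
    (hq : 0 < q) (a : ι → ℕ → (Fin m → ℤ) → ℝ≥0∞) :
    (∑' i, ∑' j : ℕ, ∑ ℓ ∈ Finset.Icc (fun _ => -(2 ^ j : ℤ)) (fun _ => (2 ^ j : ℤ)),
        ((2 : ℝ≥0∞) ^ ((c * (j : ℝ)) * s) * a i j ℓ) ^ q) ^ (1 / q)
      ≤ embeddingConst ι m c ε q *
        ⨆ (i) (j : ℕ) (ℓ ∈ Finset.Icc (fun _ => -(2 ^ j : ℤ)) (fun _ => (2 ^ j : ℤ))),
          (2 : ℝ≥0∞) ^ ((c * (j : ℝ)) * (s + ε)) * a i j ℓ := by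
  set M := ⨆ (i) (j : ℕ) (ℓ ∈ Finset.Icc (fun _ => -(2 ^ j : ℤ)) (fun _ => (2 ^ j : ℤ))),
    (2 : ℝ≥0∞) ^ ((c * (j : ℝ)) * (s + ε)) * a i j ℓ
  have hcard (j : ℕ) : (#(Finset.Icc (fun _ : Fin m => -(2 ^ j : ℤ)) (fun _ => 2 ^ j)) : ℝ≥0∞)
      ≤ 4 ^ m * (2 ^ m) ^ j := by
    exact_mod_cast Fintype.card_fin m ▸ card_Icc_neg_two_pow_le (ι := Fin m) j
  have hterm (i : ι) (j : ℕ) (ℓ : Fin m → ℤ)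
      (hℓ : ℓ ∈ Finset.Icc (fun _ => -(2 ^ j : ℤ)) (fun _ => 2 ^ j)) :
      ((2 : ℝ≥0∞) ^ ((c * j) * s) * a i j ℓ) ^ q ≤ (2 ^ (-(c * ε * q))) ^ j * M ^ q := by
    have hle : (2 : ℝ≥0∞) ^ ((c * j) * s + c * j * ε) * a i j ℓ ≤ M := by
      rw [← mul_add]
      exact le_iSup₂_of_le i j (le_iSup₂_of_le ℓ hℓ le_rfl)
    convert rpow_mul_le_of_rpow_add_mul_le (by norm_num) (by norm_num) hq.le hle using 2
    rw [← ENNReal.rpow_natCast, ← ENNReal.rpow_mul]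
    ring_nf
  have hpow : ∑' i, ∑' j : ℕ, ∑ ℓ ∈ Finset.Icc (fun _ => -(2 ^ j : ℤ)) (fun _ => (2 ^ j : ℤ)),
      ((2 : ℝ≥0∞) ^ ((c * (j : ℝ)) * s) * a i j ℓ) ^ q
        ≤ embeddingConst ι m c ε q ^ q * M ^ q := by
    calc _ ≤ ∑' _ : ι, 4 ^ m * (1 - 2 ^ m * 2 ^ (-(c * ε * q)))⁻¹ * M ^ q :=
          ENNReal.tsum_le_tsum fun i => tsum_sum_le_of_card_le_of_le _ _ hcard (hterm i)
      _ = embeddingConst ι m c ε q ^ q * M ^ q := by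
          rw [embeddingConst, ← ENNReal.rpow_mul, one_div_mul_cancel hq.ne', ENNReal.rpow_one,
            tsum_fintype, Finset.sum_const, Finset.card_univ, nsmul_eq_mul]
          ring
  calc _ ≤ (embeddingConst ι m c ε q ^ q * M ^ q) ^ (1 / q) := by gcongr
    _ = embeddingConst ι m c ε q * M := by
        rw [ENNReal.mul_rpow_of_nonneg _ _ (by positivity), ← ENNReal.rpow_mul, ← ENNReal.rpow_mul,
          mul_one_div_cancel hq.ne', ENNReal.rpow_one, ENNReal.rpow_one]

end ShearBesov

open ShearBesov in
/-- Key inequality for the embedding `B^{s+ε,q₁}_p(AB) ↪ B^{s,q₀}_p(AB)`: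
for `ε > (d-1)/((d+1)q₀)` and any nonnegative array `a_{𝔡,j,ℓ}` indexed by the
directions `𝔡`, the scales `j ≥ 0` and the shear parameters `ℓ ∈ ℤ^{d-1}` with
`|ℓ_i| ≤ 2^j`, the `ℓ^{q₀}`-sum of `2^{(d+1)js} a_{𝔡,j,ℓ}` is dominated by the
supremum of `2^{(d+1)j(s+ε)} a_{𝔡,j,ℓ}`. -/
theorem shear_besov_eps_embedding_key (d : ℕ) (hd : 2 ≤ d) (s ε q₀ : ℝ)
    (hq₀ : 0 < q₀) (hε : ((d : ℝ) - 1) / (((d : ℝ) + 1) * q₀) < ε) :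
    ∃ C : ℝ, 0 < C ∧
      ∀ a : Fin d → ℕ → (Fin (d - 1) → ℤ) → ℝ≥0∞,
        (∑' 𝔡 : Fin d, ∑' j : ℕ,
            ∑ ℓ ∈ Finset.Icc (fun _ => -(2 ^ j : ℤ)) (fun _ => (2 ^ j : ℤ)),
              ((2 : ℝ≥0∞) ^ ((((d : ℝ) + 1) * (j : ℝ)) * s) * a 𝔡 j ℓ) ^ q₀) ^ (1 / q₀)
          ≤ ENNReal.ofReal C *
            ⨆ (𝔡 : Fin d) (j : ℕ)
              (ℓ ∈ Finset.Icc (fun _ => -(2 ^ j : ℤ)) (fun _ => (2 ^ j : ℤ))),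
              (2 : ℝ≥0∞) ^ ((((d : ℝ) + 1) * (j : ℝ)) * (s + ε)) * a 𝔡 j ℓ := by
  set K := embeddingConst (Fin d) (d - 1) ((d : ℝ) + 1) ε q₀
  have hK : K ≠ ∞ := by
    refine embeddingConst_ne_top _ hq₀ ?_
    rw [div_lt_iff₀ (by positivity)] at hε
    push_cast [Nat.cast_sub (by omega : 1 ≤ d)]
    linarith
  refine ⟨K.toReal + 1, by positivity, fun a => ?_⟩
  refine (lq_sum_le_embeddingConst_mul_iSup (d - 1) _ s ε q₀ hq₀ a).trans ?_
  gcongr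
  rw [ENNReal.le_ofReal_iff_toReal_le hK (by positivity)]
  linarith
end
end
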